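/- arXiv:math/0602160 — 10 statements merged into one kernel-verified Lean document; each statement's English description precedes it below -/
import Mathlib

section
/- Let (η(t), ω₁(t), ω₂(t), ω₃(t)) be a one-parameter family of SU(2)-structures on N⁵ satisfying the evolution nearly hypo equations ∂ₜω₁ = -dη - 3ω₃, ∂ₜ(η∧ω₃) = dω₂ + 4η∧ω₁, ∂ₜ(η∧ω₂) = -dω₃. If the nearly hypo conditions dω₁ = 3η∧ω₂ and d(η∧ω₃) = -2ω₁∧ω₁ hold at t = 0, then they hold for all t. -/
/-- Let `(η(t), ω₁(t), ω₂(t), ω₃(t))` be a one-parameter family of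
SU(2)-structures on `N⁵` satisfying the evolution nearly hypo equations
`∂ₜω₁ = -dη - 3ω₃`, `∂ₜ(η∧ω₃) = dω₂ + 4η∧ω₁`, `∂ₜ(η∧ω₂) = -dω₃`.
If the nearly hypo conditions `dω₁ = 3η∧ω₂` and `d(η∧ω₃) = -2ω₁∧ω₁` hold at `t = 0`,
then they hold for all `t`.

We work in the de Rham algebra `A` of `N⁵` (wedge written `*`), with the exterior derivative a
continuous linear map with `d² = 0`; graded Leibniz rules and (graded-)commutation facts for the
forms involved, as well as the pointwise SU(2)-compatibility conditions, are hypotheses. -/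
theorem nearlyHypo_preserved_by_evolution {A : Type*} [NormedRing A] [NormedAlgebra ℝ A]
    (d : A →L[ℝ] A) (η ω₁ ω₂ ω₃ v : ℝ → A)
    (hη : Differentiable ℝ η) (h1 : Differentiable ℝ ω₁)
    (h2 : Differentiable ℝ ω₂) (h3 : Differentiable ℝ ω₃)
    (hdd : ∀ x : A, d (d x) = 0)
    (hηη : ∀ t, η t * η t = 0)
    -- SU(2)-structure compatibility at each time t : ωᵢ ∧ ωⱼ = δᵢⱼ v
    (h11 : ∀ t, ω₁ t * ω₁ t = v t) (h22 : ∀ t, ω₂ t * ω₂ t = v t)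
    (h33 : ∀ t, ω₃ t * ω₃ t = v t)
    (h13 : ∀ t, ω₁ t * ω₃ t = 0) (h31 : ∀ t, ω₃ t * ω₁ t = 0)
    -- 2-forms commute with 2-forms
    (hcomm : ∀ t, d (η t) * ω₁ t = ω₁ t * d (η t))
    -- Leibniz rules for the 1-form η(t) against the 2-forms ωᵢ(t)
    (hLη₁ : ∀ t, d (η t * ω₁ t) = d (η t) * ω₁ t - η t * d (ω₁ t))
    (hLη₂ : ∀ t, d (η t * ω₂ t) = d (η t) * ω₂ t - η t * d (ω₂ t))
    (hLη₃ : ∀ t, d (η t * ω₃ t) = d (η t) * ω₃ t - η t * d (ω₃ t))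
    -- evolution nearly hypo equations
    (hev₁ : ∀ t, deriv ω₁ t = -d (η t) - (3 : ℝ) • ω₃ t)
    (hev₂ : ∀ t, deriv (fun s => η s * ω₃ s) t = d (ω₂ t) + (4 : ℝ) • (η t * ω₁ t))
    (hev₃ : ∀ t, deriv (fun s => η s * ω₂ s) t = -d (ω₃ t))
    -- nearly hypo at t = 0
    (h0 : d (ω₁ 0) = (3 : ℝ) • (η 0 * ω₂ 0) ∧
          d (η 0 * ω₃ 0) = (-2 : ℝ) • (ω₁ 0 * ω₁ 0)) :
    ∀ t, d (ω₁ t) = (3 : ℝ) • (η t * ω₂ t) ∧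
         d (η t * ω₃ t) = (-2 : ℝ) • (ω₁ t * ω₁ t) := by

  -- First conserved quantity: F t = d(ω₁ t) - 3•(η t * ω₂ t)
  have keyF : ∀ t, HasDerivAt (fun s => d (ω₁ s) - (3 : ℝ) • (η s * ω₂ s)) 0 t := by
    intro t
    have hA : HasDerivAt (fun s => d (ω₁ s)) (d (deriv ω₁ t)) t :=
      d.hasFDerivAt.comp_hasDerivAt t (h1 t).hasDerivAt
    have hBdiff : DifferentiableAt ℝ (fun s => η s * ω₂ s) t := (hη t).mul (h2 t)
    have hB : HasDerivAt (fun s => η s * ω₂ s) (-d (ω₃ t)) t := hev₃ t ▸ hBdiff.hasDerivAt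
    have := hA.sub (hB.const_smul (3 : ℝ))
    have hval : d (deriv ω₁ t) - (3 : ℝ) • (-d (ω₃ t)) = 0 := by
      rw [hev₁ t]
      simp [hdd, map_sub, map_neg, map_smul, smul_neg]
    rwa [hval] at this
  have hFconst : ∀ t, d (ω₁ t) - (3 : ℝ) • (η t * ω₂ t)
      = d (ω₁ 0) - (3 : ℝ) • (η 0 * ω₂ 0) := fun t =>
    is_const_of_deriv_eq_zero (fun s => (keyF s).differentiableAt)
      (fun s => (keyF s).deriv) t 0
  have hF : ∀ t, d (ω₁ t) = (3 : ℝ) • (η t * ω₂ t) := by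
    intro t
    have := hFconst t
    rw [h0.1, sub_self] at this
    exact sub_eq_zero.mp this
  -- Second conserved quantity: G t = d(η t * ω₃ t) + 2•(ω₁ t * ω₁ t)
  have keyG : ∀ t, HasDerivAt (fun s => d (η s * ω₃ s) + (2 : ℝ) • (ω₁ s * ω₁ s)) 0 t := by
    intro t
    have hCdiff : DifferentiableAt ℝ (fun s => η s * ω₃ s) t := (hη t).mul (h3 t)
    have hC : HasDerivAt (fun s => d (η s * ω₃ s))
        (d (d (ω₂ t) + (4 : ℝ) • (η t * ω₁ t))) t := by
      have := d.hasFDerivAt.comp_hasDerivAt t hCdiff.hasDerivAt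
      rwa [hev₂ t] at this
    have hD : HasDerivAt (fun s => ω₁ s * ω₁ s)
        (deriv ω₁ t * ω₁ t + ω₁ t * deriv ω₁ t) t :=
      (h1 t).hasDerivAt.mul (h1 t).hasDerivAt
    have := hC.add (hD.const_smul (2 : ℝ))
    have hval : d (d (ω₂ t) + (4 : ℝ) • (η t * ω₁ t))
        + (2 : ℝ) • (deriv ω₁ t * ω₁ t + ω₁ t * deriv ω₁ t) = 0 := by
      rw [hev₁ t, map_add, map_smul, hdd, hLη₁ t, hF t]
      have hηηω : η t * ((3 : ℝ) • (η t * ω₂ t)) = 0 := by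
        rw [mul_smul_comm, ← mul_assoc, hηη t, zero_mul, smul_zero]
      rw [hηηω]
      simp only [sub_mul, mul_sub, neg_mul, mul_neg, smul_mul_assoc, mul_smul_comm,
        h13 t, h31 t, hcomm t, smul_zero, sub_zero, zero_add, smul_sub, smul_add,
        smul_neg, smul_smul, sub_self, add_zero]
      abel_nf
      module
    rwa [hval] at this
  have hGconst : ∀ t, d (η t * ω₃ t) + (2 : ℝ) • (ω₁ t * ω₁ t)
      = d (η 0 * ω₃ 0) + (2 : ℝ) • (ω₁ 0 * ω₁ 0) := fun t =>
    is_const_of_deriv_eq_zero (fun s => (keyG s).differentiableAt)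
      (fun s => (keyG s).deriv) t 0
  intro t
  refine ⟨hF t, ?_⟩
  have := hGconst t
  rw [h0.2] at this
  have h2' : (-2 : ℝ) • (ω₁ 0 * ω₁ 0) + (2 : ℝ) • (ω₁ 0 * ω₁ 0) = 0 := by module
  rw [h2'] at this
  have := eq_neg_of_add_eq_zero_left this
  rw [this]; module
end

section
/- Let (η, ω₁, ω₂, ω₃) satisfy the Sasaki-Einstein equations dη = -2ω₃, dω₁ = 3η∧ω₂, dω₂ = -3η∧ω₁ and ωᵢ∧ωⱼ = δᵢⱼ v. Define for t ∈ ℝ: η(t) = sin t · η, ω₁(t) = sin²t (sin t ω₁ + cos t ω₃), ω₂(t) = sin²t ω₂, ω₃(t) = sin²t (-cos t ω₁ + sin t ω₃). Then this family satisfies the evolution nearly hypo equations ∂ₜω₁(t) = -dη(t) - 3ω₃(t), ∂ₜ(η(t)∧ω₃(t)) = dω₂(t) + 4 η(t)∧ω₁(t), ∂ₜ(η(t)∧ω₂(t)) = -dω₃(t). -/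
open Real

/-- Let `(η, ω₁, ω₂, ω₃)` satisfy the Sasaki-Einstein equations
`dη = -2ω₃`, `dω₁ = 3η∧ω₂`, `dω₂ = -3η∧ω₁` and `ωᵢ∧ωⱼ = δᵢⱼ v`.  Then the one-parameter family
`η(t) = sin t · η`, `ω₁(t) = sin²t (sin t ω₁ + cos t ω₃)`, `ω₂(t) = sin²t ω₂`,
`ω₃(t) = sin²t (-cos t ω₁ + sin t ω₃)` satisfies the evolution nearly hypo equations
`∂ₜω₁(t) = -dη(t) - 3ω₃(t)`, `∂ₜ(η(t)∧ω₃(t)) = dω₂(t) + 4 η(t)∧ω₁(t)`,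
`∂ₜ(η(t)∧ω₂(t)) = -dω₃(t)`.

Forms live in the de Rham algebra `A` of `N⁵` (wedge written `*`), `d` acts only on `A` (not on
`t`), and `∂ₜ` is `deriv`. -/
theorem sinCone_family_solves_evolution_nearlyHypo {A : Type*}
    [NormedRing A] [NormedAlgebra ℝ A]
    (d : A →ₗ[ℝ] A) (η ω₁ ω₂ ω₃ v : A)
    -- SU(2)-structure compatibility: ωᵢ ∧ ωⱼ = δᵢⱼ v
    (h11 : ω₁ * ω₁ = v) (h22 : ω₂ * ω₂ = v) (h33 : ω₃ * ω₃ = v)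
    (h12 : ω₁ * ω₂ = 0) (h21 : ω₂ * ω₁ = 0) (h13 : ω₁ * ω₃ = 0)
    (h31 : ω₃ * ω₁ = 0) (h23 : ω₂ * ω₃ = 0) (h32 : ω₃ * ω₂ = 0)
    (hdd : ∀ x : A, d (d x) = 0)
    -- Sasaki-Einstein equations
    (hse₁ : d η = (-2 : ℝ) • ω₃)
    (hse₂ : d ω₁ = (3 : ℝ) • (η * ω₂))
    (hse₃ : d ω₂ = (-3 : ℝ) • (η * ω₁)) :
    -- ∂ₜω₁(t) = -dη(t) - 3ω₃(t)
    (∀ t : ℝ, deriv (fun s : ℝ => sin s ^ 2 • (sin s • ω₁ + cos s • ω₃)) t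
        = -d (sin t • η) - (3 : ℝ) • (sin t ^ 2 • (-(cos t) • ω₁ + sin t • ω₃))) ∧
    -- ∂ₜ(η(t)∧ω₃(t)) = dω₂(t) + 4 η(t)∧ω₁(t)
    (∀ t : ℝ, deriv (fun s : ℝ =>
          (sin s • η) * (sin s ^ 2 • (-(cos s) • ω₁ + sin s • ω₃))) t
        = d (sin t ^ 2 • ω₂)
          + (4 : ℝ) • ((sin t • η) * (sin t ^ 2 • (sin t • ω₁ + cos t • ω₃)))) ∧
    -- ∂ₜ(η(t)∧ω₂(t)) = -dω₃(t)
    (∀ t : ℝ, deriv (fun s : ℝ => (sin s • η) * (sin s ^ 2 • ω₂)) t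
        = -d (sin t ^ 2 • (-(cos t) • ω₁ + sin t • ω₃))) := by
  have hdω₃ : d ω₃ = 0 := by
    have h := hdd η
    rw [hse₁, map_smul] at h
    have h2 := congrArg (fun x => (-2 : ℝ)⁻¹ • x) h
    simpa [smul_smul] using h2
  refine ⟨?_, ?_, ?_⟩
  · intro t
    have hfe : (fun s : ℝ => sin s ^ 2 • (sin s • ω₁ + cos s • ω₃))
        = fun s : ℝ => (sin s ^ 3) • ω₁ + (sin s ^ 2 * cos s) • ω₃ := by
      funext s
      simp only [smul_add, smul_smul]
      module
    rw [hfe]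
    have h1 : HasDerivAt (fun s : ℝ => (sin s ^ 3) • ω₁ + (sin s ^ 2 * cos s) • ω₃)
        (((3 : ℕ) * sin t ^ 2 * cos t) • ω₁
          + (((2 : ℕ) * sin t ^ 1 * cos t) * cos t + sin t ^ 2 * -sin t) • ω₃) t :=
      (((Real.hasDerivAt_sin t).pow 3).smul_const ω₁).add
        ((((Real.hasDerivAt_sin t).pow 2).mul (Real.hasDerivAt_cos t)).smul_const ω₃)
    rw [h1.deriv, map_smul, hse₁]
    have hc : cos t * cos t = 1 - sin t ^ 2 := by
      have := sin_sq_add_cos_sq t; nlinarith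
    match_scalars
    · push_cast; ring
    · push_cast; linear_combination (2 * sin t) * sin_sq_add_cos_sq t
  · intro t
    have hfe : (fun s : ℝ => (sin s • η) * (sin s ^ 2 • (-(cos s) • ω₁ + sin s • ω₃)))
        = fun s : ℝ => (-(sin s ^ 3 * cos s)) • (η * ω₁) + (sin s ^ 4) • (η * ω₃) := by
      funext s
      simp only [mul_add, smul_add, smul_mul_assoc, mul_smul_comm, smul_smul]
      module
    rw [hfe]
    have h1 : HasDerivAt (fun s : ℝ => (-(sin s ^ 3 * cos s)) • (η * ω₁) + (sin s ^ 4) • (η * ω₃))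
        ((-(((3 : ℕ) * sin t ^ 2 * cos t) * cos t + sin t ^ 3 * -sin t)) • (η * ω₁)
          + ((4 : ℕ) * sin t ^ 3 * cos t) • (η * ω₃)) t :=
      (((((Real.hasDerivAt_sin t).pow 3).mul (Real.hasDerivAt_cos t)).neg).smul_const (η * ω₁)).add
        (((Real.hasDerivAt_sin t).pow 4).smul_const (η * ω₃))
    rw [h1.deriv, map_smul, hse₃]
    simp only [mul_add, smul_add, smul_mul_assoc, mul_smul_comm, smul_smul]
    match_scalars
    · push_cast; linear_combination (-3 * sin t ^ 2) * sin_sq_add_cos_sq t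
    · push_cast; ring
  · intro t
    have hfe : (fun s : ℝ => (sin s • η) * (sin s ^ 2 • ω₂))
        = fun s : ℝ => (sin s ^ 3) • (η * ω₂) := by
      funext s
      simp only [smul_mul_assoc, mul_smul_comm, smul_smul]
      module
    rw [hfe]
    have h1 : HasDerivAt (fun s : ℝ => (sin s ^ 3) • (η * ω₂))
        (((3 : ℕ) * sin t ^ 2 * cos t) • (η * ω₂)) t :=
      ((Real.hasDerivAt_sin t).pow 3).smul_const (η * ω₂)
    rw [h1.deriv, map_smul, map_add, map_smul, map_smul, hse₂, hdω₃]
    match_scalars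
    push_cast; ring
end

section
/- Let (η, ω₁, ω₂, ω₃) be an SU(2)-structure on N⁵ and define on N⁵ × (0,π): F = sin²t (sin t ω₁ + cos t ω₃) + sin t η∧dt, Ψ₊ = sin³t η∧ω₂ - sin²t(-cos t ω₁ + sin t ω₃)∧dt, Ψ₋ = sin³t(-cos t ω₁ + sin t ω₃)∧η + sin²t ω₂∧dt. Then the nearly Kähler equations dF = 3Ψ₊ and dΨ₋ = -2 F∧F hold if and only if dη = -2ω₃, dω₁ = 3η∧ω₂, dω₂ = -3η∧ω₁. -/
/-!
At `t = π/2`, where `sin t = 1` and `cos t = 0`, the `dt`-free part of `dF = 3Ψ₊` and the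
`dt`-parts of `dF = 3Ψ₊` and `dΨ₋ = -2 F∧F` are exactly the three Sasaki–Einstein equations.
Conversely, `dη = -2ω₃` and `d² = 0` give `dω₃ = 0`, hence `d(ω₁∧η) = 0` and
`d(ω₃∧η) = -2v`, after which all four equations are trigonometric identities that follow
from `sin² t + cos² t = 1`.
-/

open Real

variable {A : Type*}

/-- A form on `N⁵ × ℝ` is a pair `(α, β)` of `t`-dependent forms on `N⁵`, standing for
`α(t) + β(t) ∧ dt`.  `dProd d k` is the exterior derivative on the product
(`k` = degree of the `dt`-free part): `d(α + β∧dt) = dα + ((-1)^k ∂ₜα + dβ) ∧ dt`. -/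
noncomputable def dProd [NormedRing A] [NormedAlgebra ℝ A] (d : A →ₗ[ℝ] A) (k : ℕ)
    (ω : (ℝ → A) × (ℝ → A)) : (ℝ → A) × (ℝ → A) :=
  (fun t => d (ω.1 t), fun t => ((-1 : ℝ)) ^ k • deriv ω.1 t + d (ω.2 t))

/-- The sin-cone 2-form `F = sin²t (sin t ω₁ + cos t ω₃) + sin t η∧dt`. -/
noncomputable def coneF [NormedRing A] [NormedAlgebra ℝ A] (η ω₁ ω₃ : A) :
    (ℝ → A) × (ℝ → A) :=
  (fun t => sin t ^ 2 • (sin t • ω₁ + cos t • ω₃), fun t => sin t • η)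

/-- The sin-cone 3-form `Ψ₊ = sin³t η∧ω₂ - sin²t(-cos t ω₁ + sin t ω₃)∧dt`. -/
noncomputable def conePsiPlus [NormedRing A] [NormedAlgebra ℝ A] (η ω₁ ω₂ ω₃ : A) :
    (ℝ → A) × (ℝ → A) :=
  (fun t => sin t ^ 3 • (η * ω₂), fun t => -(sin t ^ 2) • (-(cos t) • ω₁ + sin t • ω₃))

/-- The sin-cone 3-form `Ψ₋ = sin³t(-cos t ω₁ + sin t ω₃)∧η + sin²t ω₂∧dt`. -/
noncomputable def conePsiMinus [NormedRing A] [NormedAlgebra ℝ A] (η ω₁ ω₂ ω₃ : A) :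
    (ℝ → A) × (ℝ → A) :=
  (fun t => sin t ^ 3 • ((-(cos t) • ω₁ + sin t • ω₃) * η), fun t => sin t ^ 2 • ω₂)

/-- The wedge square `ω∧ω` of a product form `ω = α + β∧dt` whose `dt`-free part has even
degree: `(α + β∧dt)² = α∧α + (α∧β + β∧α)∧dt`. -/
noncomputable def wedgeSq [NormedRing A] (ω : (ℝ → A) × (ℝ → A)) : (ℝ → A) × (ℝ → A) :=
  (fun t => ω.1 t * ω.1 t, fun t => ω.1 t * ω.2 t + ω.2 t * ω.1 t)

section SinCone

variable [NormedRing A] [NormedAlgebra ℝ A] (d : A →ₗ[ℝ] A) (η ω₁ ω₂ ω₃ : A)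

lemma hasDerivAt_coneF_fst (t : ℝ) :
    HasDerivAt (coneF η ω₁ ω₃).1
      ((3 * sin t ^ 2 * cos t) • ω₁ + (2 * sin t * cos t ^ 2 - sin t ^ 3) • ω₃) t := by
  refine (((hasDerivAt_sin t).fun_pow 2).fun_smul
    (((hasDerivAt_sin t).smul_const ω₁).fun_add
      ((hasDerivAt_cos t).smul_const ω₃))).congr_deriv ?_
  match_scalars <;> ring

lemma hasDerivAt_conePsiMinus_fst (t : ℝ) :
    HasDerivAt (conePsiMinus η ω₁ ω₂ ω₃).1
      ((sin t ^ 4 - 3 * sin t ^ 2 * cos t ^ 2) • (ω₁ * η)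
        + (4 * sin t ^ 3 * cos t) • (ω₃ * η)) t := by
  refine (((hasDerivAt_sin t).fun_pow 3).fun_smul
    ((((hasDerivAt_cos t).fun_neg.smul_const ω₁).fun_add
      ((hasDerivAt_sin t).smul_const ω₃)).mul_const η)).congr_deriv ?_
  simp only [add_mul, smul_mul_assoc]
  match_scalars <;> ring

lemma dProd_coneF_fst (t : ℝ) :
    (dProd d 2 (coneF η ω₁ ω₃)).1 t = sin t ^ 3 • d ω₁ + (sin t ^ 2 * cos t) • d ω₃ := by
  simp only [dProd, coneF, map_smul, map_add]
  match_scalars <;> ring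

lemma dProd_coneF_snd (t : ℝ) :
    (dProd d 2 (coneF η ω₁ ω₃)).2 t
      = (3 * sin t ^ 2 * cos t) • ω₁ + (2 * sin t * cos t ^ 2 - sin t ^ 3) • ω₃
        + sin t • d η := by
  simp only [dProd]
  rw [(hasDerivAt_coneF_fst η ω₁ ω₃ t).deriv]
  simp only [coneF, map_smul]
  match_scalars <;> ring

lemma dProd_conePsiMinus_fst (t : ℝ) :
    (dProd d 3 (conePsiMinus η ω₁ ω₂ ω₃)).1 t
      = (-(sin t ^ 3 * cos t)) • d (ω₁ * η) + sin t ^ 4 • d (ω₃ * η) := by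
  simp only [dProd, conePsiMinus, add_mul, smul_mul_assoc, map_smul, map_add]
  match_scalars <;> ring

lemma dProd_conePsiMinus_snd (t : ℝ) :
    (dProd d 3 (conePsiMinus η ω₁ ω₂ ω₃)).2 t
      = (3 * sin t ^ 2 * cos t ^ 2 - sin t ^ 4) • (ω₁ * η)
        - (4 * sin t ^ 3 * cos t) • (ω₃ * η) + sin t ^ 2 • d ω₂ := by
  simp only [dProd]
  rw [(hasDerivAt_conePsiMinus_fst η ω₁ ω₂ ω₃ t).deriv]
  simp only [conePsiMinus, map_smul]
  match_scalars <;> ring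

lemma wedgeSq_coneF_fst (t : ℝ) :
    (wedgeSq (coneF η ω₁ ω₃)).1 t
      = sin t ^ 6 • (ω₁ * ω₁) + (sin t ^ 5 * cos t) • (ω₁ * ω₃ + ω₃ * ω₁)
        + (sin t ^ 4 * cos t ^ 2) • (ω₃ * ω₃) := by
  simp only [wedgeSq, coneF, add_mul, mul_add, smul_mul_assoc, mul_smul_comm]
  match_scalars <;> ring

lemma wedgeSq_coneF_snd (t : ℝ) :
    (wedgeSq (coneF η ω₁ ω₃)).2 t
      = sin t ^ 4 • (ω₁ * η + η * ω₁) + (sin t ^ 3 * cos t) • (ω₃ * η + η * ω₃) := by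
  simp only [wedgeSq, coneF, add_mul, mul_add, smul_mul_assoc, mul_smul_comm]
  match_scalars <;> ring

lemma sasakiEinstein_of_nearlyKaehler_at_pi_div_two (hc₁ : ω₁ * η = η * ω₁)
    (hF₁ : (dProd d 2 (coneF η ω₁ ω₃)).1 (π / 2)
      = (3 : ℝ) • (conePsiPlus η ω₁ ω₂ ω₃).1 (π / 2))
    (hF₂ : (dProd d 2 (coneF η ω₁ ω₃)).2 (π / 2)
      = (3 : ℝ) • (conePsiPlus η ω₁ ω₂ ω₃).2 (π / 2))
    (hΨ₂ : (dProd d 3 (conePsiMinus η ω₁ ω₂ ω₃)).2 (π / 2)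
      = (-2 : ℝ) • (wedgeSq (coneF η ω₁ ω₃)).2 (π / 2)) :
    d η = (-2 : ℝ) • ω₃ ∧ d ω₁ = (3 : ℝ) • (η * ω₂) ∧ d ω₂ = (-3 : ℝ) • (η * ω₁) := by
  simp only [dProd_coneF_fst, dProd_coneF_snd, dProd_conePsiMinus_snd, wedgeSq_coneF_snd,
    conePsiPlus, sin_pi_div_two, cos_pi_div_two, hc₁] at hF₁ hF₂ hΨ₂
  refine ⟨?_, ?_, ?_⟩
  · linear_combination (norm := module) hF₂
  · linear_combination (norm := module) hF₁
  · linear_combination (norm := module) hΨ₂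

lemma nearlyKaehler_of_sasakiEinstein {v : A} (h11 : ω₁ * ω₁ = v) (h33 : ω₃ * ω₃ = v)
    (h13 : ω₁ * ω₃ = 0) (h31 : ω₃ * ω₁ = 0) (hηη : η * η = 0)
    (hc₁ : ω₁ * η = η * ω₁) (hc₂ : ω₂ * η = η * ω₂) (hc₃ : ω₃ * η = η * ω₃)
    (hddη : d (d η) = 0)
    (hL₁η : d (ω₁ * η) = d ω₁ * η + ω₁ * d η) (hL₃η : d (ω₃ * η) = d ω₃ * η + ω₃ * d η)
    (hdη : d η = (-2 : ℝ) • ω₃) (hdω₁ : d ω₁ = (3 : ℝ) • (η * ω₂))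
    (hdω₂ : d ω₂ = (-3 : ℝ) • (η * ω₁)) (t : ℝ) :
    (dProd d 2 (coneF η ω₁ ω₃)).1 t = (3 : ℝ) • (conePsiPlus η ω₁ ω₂ ω₃).1 t ∧
      (dProd d 2 (coneF η ω₁ ω₃)).2 t = (3 : ℝ) • (conePsiPlus η ω₁ ω₂ ω₃).2 t ∧
      (dProd d 3 (conePsiMinus η ω₁ ω₂ ω₃)).1 t = (-2 : ℝ) • (wedgeSq (coneF η ω₁ ω₃)).1 t ∧
      (dProd d 3 (conePsiMinus η ω₁ ω₂ ω₃)).2 t = (-2 : ℝ) • (wedgeSq (coneF η ω₁ ω₃)).2 t := by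
  have hdω₃ : d ω₃ = 0 := by
    rw [hdη, map_smul] at hddη
    exact (smul_eq_zero.mp hddη).resolve_left (by norm_num)
  have hdω₁η : d (ω₁ * η) = 0 := by
    rw [hL₁η, hdω₁, hdη, smul_mul_assoc, mul_assoc, hc₂, ← mul_assoc, hηη, mul_smul_comm, h13]
    simp
  have hdω₃η : d (ω₃ * η) = (-2 : ℝ) • v := by
    rw [hL₃η, hdω₃, hdη, mul_smul_comm, h33, zero_mul, zero_add]
  refine ⟨?_, ?_, ?_, ?_⟩
  · rw [dProd_coneF_fst, hdω₁, hdω₃, conePsiPlus]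
    match_scalars
    ring
  · rw [dProd_coneF_snd, hdη, conePsiPlus, cos_sq']
    match_scalars <;> ring
  · rw [dProd_conePsiMinus_fst, wedgeSq_coneF_fst, hdω₁η, hdω₃η, h11, h33, h13, h31, cos_sq']
    match_scalars
    ring
  · rw [dProd_conePsiMinus_snd, wedgeSq_coneF_snd, hdω₂, hc₁, hc₃, cos_sq']
    match_scalars <;> ring

end SinCone

theorem sinCone_nearlyKaehler_iff_sasakiEinstein_general [NormedRing A] [NormedAlgebra ℝ A]
    (d : A →ₗ[ℝ] A) (η ω₁ ω₂ ω₃ v : A)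
    -- SU(2)-structure compatibility: ω₁∧ω₁ = ω₂∧ω₂ = ω₃∧ω₃ = v, ωᵢ∧ωⱼ = 0 (i ≠ j), η∧v ≠ 0
    (h11 : ω₁ * ω₁ = v) (h33 : ω₃ * ω₃ = v) (h13 : ω₁ * ω₃ = 0) (h31 : ω₃ * ω₁ = 0)
    (hηη : η * η = 0)
    -- graded commutativity: 2-forms commute with the 1-form η
    (hc₁ : ω₁ * η = η * ω₁) (hc₂ : ω₂ * η = η * ω₂) (hc₃ : ω₃ * η = η * ω₃)
    (hdd : ∀ x : A, d (d x) = 0)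
    -- graded Leibniz rules
    (hL₁η : d (ω₁ * η) = d ω₁ * η + ω₁ * d η)
    (hL₃η : d (ω₃ * η) = d ω₃ * η + ω₃ * d η) :
    ((∀ t ∈ Set.Ioo (0 : ℝ) π,
        (dProd d 2 (coneF η ω₁ ω₃)).1 t = (3 : ℝ) • (conePsiPlus η ω₁ ω₂ ω₃).1 t ∧
        (dProd d 2 (coneF η ω₁ ω₃)).2 t = (3 : ℝ) • (conePsiPlus η ω₁ ω₂ ω₃).2 t ∧
        (dProd d 3 (conePsiMinus η ω₁ ω₂ ω₃)).1 t
          = (-2 : ℝ) • (wedgeSq (coneF η ω₁ ω₃)).1 t ∧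
        (dProd d 3 (conePsiMinus η ω₁ ω₂ ω₃)).2 t
          = (-2 : ℝ) • (wedgeSq (coneF η ω₁ ω₃)).2 t) ↔
      (d η = (-2 : ℝ) • ω₃ ∧ d ω₁ = (3 : ℝ) • (η * ω₂) ∧
        d ω₂ = (-3 : ℝ) • (η * ω₁))) := by
  constructor
  · intro h
    obtain ⟨hF₁, hF₂, -, hΨ₂⟩ := h (π / 2) ⟨by positivity, half_lt_self pi_pos⟩
    exact sasakiEinstein_of_nearlyKaehler_at_pi_div_two d η ω₁ ω₂ ω₃ hc₁ hF₁ hF₂ hΨ₂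
  · rintro ⟨hdη, hdω₁, hdω₂⟩ t -
    exact nearlyKaehler_of_sasakiEinstein d η ω₁ ω₂ ω₃ h11 h33 h13 h31 hηη hc₁ hc₂ hc₃
      (hdd η) hL₁η hL₃η hdη hdω₁ hdω₂ t

/-- For an SU(2)-structure `(η, ω₁, ω₂, ω₃)` on `N⁵`, the nearly Kähler
equations `dF = 3Ψ₊` and `dΨ₋ = -2 F∧F` hold on the sin-cone `N⁵ × (0,π)` if and only if
`dη = -2ω₃`, `dω₁ = 3η∧ω₂`, `dω₂ = -3η∧ω₁` (i.e. the structure is Sasaki-Einstein). -/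
theorem sinCone_nearlyKaehler_iff_sasakiEinstein [NormedRing A] [NormedAlgebra ℝ A]
    (d : A →ₗ[ℝ] A) (η ω₁ ω₂ ω₃ v : A)
    -- SU(2)-structure compatibility: ω₁∧ω₁ = ω₂∧ω₂ = ω₃∧ω₃ = v, ωᵢ∧ωⱼ = 0 (i ≠ j), η∧v ≠ 0
    (h11 : ω₁ * ω₁ = v) (h22 : ω₂ * ω₂ = v) (h33 : ω₃ * ω₃ = v)
    (h12 : ω₁ * ω₂ = 0) (h21 : ω₂ * ω₁ = 0) (h13 : ω₁ * ω₃ = 0)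
    (h31 : ω₃ * ω₁ = 0) (h23 : ω₂ * ω₃ = 0) (h32 : ω₃ * ω₂ = 0)
    (hnd : η * v ≠ 0) (hηη : η * η = 0)
    -- graded commutativity: 2-forms commute with the 1-form η
    (hc₁ : ω₁ * η = η * ω₁) (hc₂ : ω₂ * η = η * ω₂) (hc₃ : ω₃ * η = η * ω₃)
    (hdd : ∀ x : A, d (d x) = 0)
    -- graded Leibniz rules
    (hLη₁ : d (η * ω₁) = d η * ω₁ - η * d ω₁)
    (hLη₂ : d (η * ω₂) = d η * ω₂ - η * d ω₂)
    (hLη₃ : d (η * ω₃) = d η * ω₃ - η * d ω₃)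
    (hL₁η : d (ω₁ * η) = d ω₁ * η + ω₁ * d η)
    (hL₂η : d (ω₂ * η) = d ω₂ * η + ω₂ * d η)
    (hL₃η : d (ω₃ * η) = d ω₃ * η + ω₃ * d η) :
    ((∀ t ∈ Set.Ioo (0 : ℝ) π,
        (dProd d 2 (coneF η ω₁ ω₃)).1 t = (3 : ℝ) • (conePsiPlus η ω₁ ω₂ ω₃).1 t ∧
        (dProd d 2 (coneF η ω₁ ω₃)).2 t = (3 : ℝ) • (conePsiPlus η ω₁ ω₂ ω₃).2 t ∧
        (dProd d 3 (conePsiMinus η ω₁ ω₂ ω₃)).1 t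
          = (-2 : ℝ) • (wedgeSq (coneF η ω₁ ω₃)).1 t ∧
        (dProd d 3 (conePsiMinus η ω₁ ω₂ ω₃)).2 t
          = (-2 : ℝ) • (wedgeSq (coneF η ω₁ ω₃)).2 t) ↔
      (d η = (-2 : ℝ) • ω₃ ∧ d ω₁ = (3 : ℝ) • (η * ω₂) ∧
        d ω₂ = (-3 : ℝ) • (η * ω₁))) :=
  sinCone_nearlyKaehler_iff_sasakiEinstein_general d η ω₁ ω₂ ω₃ v h11 h33 h13 h31 hηη hc₁ hc₂ hc₃
    hdd hL₁η hL₃η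
end

section
/- Let (η, ω₁, ω₂, ω₃) be an SU(2)-structure on N⁵ with the sin-cone SU(3)-structure (F, Ψ₊, Ψ₋) on N⁵ × (0,π) defined by F = sin²t(sin t ω₁ + cos t ω₃) + sin t η∧dt, Ψ₊ = sin³t η∧ω₂ - sin²t(-cos t ω₁ + sin t ω₃)∧dt. Then the half-flat conditions dΨ₊ = 0 and d(F∧F) = 0 hold if and only if (η, ωᵢ) is double hypo, i.e. d(η∧ω₁) = 0, dω₁ = 3η∧ω₂, d(η∧ω₃) = -2ω₁∧ω₁, dω₃ = 0. -/
open Real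

variable {A : Type*}

section Helpers

variable [NormedRing A] [NormedAlgebra ℝ A]

lemma smul_cancel {c : ℝ} (hc : c ≠ 0) {x : A} (h : c • x = 0) : x = 0 := by
  have h2 := congrArg (fun y : A => c⁻¹ • y) h
  simpa [smul_smul, inv_mul_cancel₀ hc] using h2

lemma psi1_eq (d : A →ₗ[ℝ] A) (η ω₁ ω₂ ω₃ : A) (t : ℝ) :
    (dProd d 3 (conePsiPlus η ω₁ ω₂ ω₃)).1 t = sin t ^ 3 • d (η * ω₂) := by
  simp [dProd, conePsiPlus, map_smul]

lemma psi2_eq (d : A →ₗ[ℝ] A) (η ω₁ ω₂ ω₃ : A) (t : ℝ) :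
    (dProd d 3 (conePsiPlus η ω₁ ω₂ ω₃)).2 t
      = (-(3 * sin t ^ 2 * cos t)) • (η * ω₂)
        + (-(sin t ^ 2)) • ((-(cos t)) • d ω₁ + sin t • d ω₃) := by
  have hder : deriv (fun s => sin s ^ 3 • (η * ω₂)) t
      = ((3 : ℝ) * sin t ^ 2 * cos t) • (η * ω₂) := by
    have h := ((Real.hasDerivAt_sin t).pow 3).smul_const (η * ω₂)
    simpa using h.deriv
  simp only [dProd, conePsiPlus, hder, map_smul, map_add, map_neg]
  module

lemma wsq1_eq (η ω₁ ω₃ v : A)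
    (h11 : ω₁ * ω₁ = v) (h33 : ω₃ * ω₃ = v) (h13 : ω₁ * ω₃ = 0) (h31 : ω₃ * ω₁ = 0)
    (t : ℝ) : (wedgeSq (coneF η ω₁ ω₃)).1 t = sin t ^ 4 • v := by
  simp only [wedgeSq, coneF, smul_mul_assoc, mul_smul_comm, mul_add, add_mul,
    smul_add, smul_smul, h11, h33, h13, h31, smul_zero, add_zero, zero_add]
  match_scalars
  nlinarith [sin_sq_add_cos_sq t]

lemma wsq2_eq (η ω₁ ω₃ : A) (hc₁ : ω₁ * η = η * ω₁) (hc₃ : ω₃ * η = η * ω₃)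
    (t : ℝ) : (wedgeSq (coneF η ω₁ ω₃)).2 t
      = (2 * sin t ^ 4) • (η * ω₁) + (2 * (sin t ^ 3 * cos t)) • (η * ω₃) := by
  simp only [wedgeSq, coneF, smul_mul_assoc, mul_smul_comm, mul_add, add_mul,
    smul_add, smul_smul, hc₁, hc₃]
  module

lemma dff1_eq (d : A →ₗ[ℝ] A) (η ω₁ ω₃ v : A)
    (h11 : ω₁ * ω₁ = v) (h33 : ω₃ * ω₃ = v) (h13 : ω₁ * ω₃ = 0) (h31 : ω₃ * ω₁ = 0)
    (t : ℝ) : (dProd d 4 (wedgeSq (coneF η ω₁ ω₃))).1 t = sin t ^ 4 • d v := by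
  simp only [dProd, wsq1_eq η ω₁ ω₃ v h11 h33 h13 h31, map_smul]

lemma dff2_eq (d : A →ₗ[ℝ] A) (η ω₁ ω₃ v : A)
    (h11 : ω₁ * ω₁ = v) (h33 : ω₃ * ω₃ = v) (h13 : ω₁ * ω₃ = 0) (h31 : ω₃ * ω₁ = 0)
    (hc₁ : ω₁ * η = η * ω₁) (hc₃ : ω₃ * η = η * ω₃) (t : ℝ) :
    (dProd d 4 (wedgeSq (coneF η ω₁ ω₃))).2 t
      = (4 * (sin t ^ 3 * cos t)) • v + (2 * sin t ^ 4) • d (η * ω₁)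
        + (2 * (sin t ^ 3 * cos t)) • d (η * ω₃) := by
  have hfun : (wedgeSq (coneF η ω₁ ω₃)).1 = fun s => sin s ^ 4 • v :=
    funext (wsq1_eq η ω₁ ω₃ v h11 h33 h13 h31)
  have hder : deriv (wedgeSq (coneF η ω₁ ω₃)).1 t
      = ((4 : ℝ) * sin t ^ 3 * cos t) • v := by
    rw [hfun]
    have h := ((Real.hasDerivAt_sin t).pow 4).smul_const v
    simpa using h.deriv
  simp only [dProd, hder, wsq2_eq η ω₁ ω₃ hc₁ hc₃ t, map_add, map_smul]
  module

end Helpers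

/-- For an SU(2)-structure `(η, ω₁, ω₂, ω₃)` on `N⁵`, the sin-cone
SU(3)-structure on `N⁵ × (0,π)` is half-flat (`dΨ₊ = 0` and `d(F∧F) = 0`) if and only if
`(η, ωᵢ)` is double hypo: `d(η∧ω₁) = 0`, `dω₁ = 3η∧ω₂`, `d(η∧ω₃) = -2ω₁∧ω₁`, `dω₃ = 0`. -/
theorem sinCone_halfFlat_iff_doubleHypo [NormedRing A] [NormedAlgebra ℝ A]
    (d : A →ₗ[ℝ] A) (η ω₁ ω₂ ω₃ v : A)
    -- SU(2)-structure compatibility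
    (h11 : ω₁ * ω₁ = v) (h22 : ω₂ * ω₂ = v) (h33 : ω₃ * ω₃ = v)
    (h12 : ω₁ * ω₂ = 0) (h21 : ω₂ * ω₁ = 0) (h13 : ω₁ * ω₃ = 0)
    (h31 : ω₃ * ω₁ = 0) (h23 : ω₂ * ω₃ = 0) (h32 : ω₃ * ω₂ = 0)
    (hnd : η * v ≠ 0) (hηη : η * η = 0)
    -- graded commutativity: 2-forms commute with the 1-form η
    (hc₁ : ω₁ * η = η * ω₁) (hc₂ : ω₂ * η = η * ω₂) (hc₃ : ω₃ * η = η * ω₃)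
    (hdd : ∀ x : A, d (d x) = 0)
    -- graded Leibniz rules
    (hLη₁ : d (η * ω₁) = d η * ω₁ - η * d ω₁)
    (hLη₂ : d (η * ω₂) = d η * ω₂ - η * d ω₂)
    (hLη₃ : d (η * ω₃) = d η * ω₃ - η * d ω₃)
    (hL₁η : d (ω₁ * η) = d ω₁ * η + ω₁ * d η)
    (hL₃η : d (ω₃ * η) = d ω₃ * η + ω₃ * d η)
    (hL11 : d (ω₁ * ω₁) = d ω₁ * ω₁ + ω₁ * d ω₁)
    (hL13 : d (ω₁ * ω₃) = d ω₁ * ω₃ + ω₁ * d ω₃)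
    (hL31 : d (ω₃ * ω₁) = d ω₃ * ω₁ + ω₃ * d ω₁)
    (hL33 : d (ω₃ * ω₃) = d ω₃ * ω₃ + ω₃ * d ω₃) :
    ((∀ t ∈ Set.Ioo (0 : ℝ) π,
        (dProd d 3 (conePsiPlus η ω₁ ω₂ ω₃)).1 t = 0 ∧
        (dProd d 3 (conePsiPlus η ω₁ ω₂ ω₃)).2 t = 0 ∧
        (dProd d 4 (wedgeSq (coneF η ω₁ ω₃))).1 t = 0 ∧
        (dProd d 4 (wedgeSq (coneF η ω₁ ω₃))).2 t = 0) ↔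
      (d (η * ω₁) = 0 ∧ d ω₁ = (3 : ℝ) • (η * ω₂) ∧
        d (η * ω₃) = (-2 : ℝ) • (ω₁ * ω₁) ∧ d ω₃ = 0)) := by
  have hv := h11
  constructor
  · intro H
    have hmem2 : (π/2 : ℝ) ∈ Set.Ioo (0:ℝ) π :=
      ⟨by positivity, by linarith [pi_pos]⟩
    have hmem4 : (π/4 : ℝ) ∈ Set.Ioo (0:ℝ) π :=
      ⟨by positivity, by linarith [pi_pos]⟩
    obtain ⟨-, hP2, -, hF2⟩ := H (π/2) hmem2
    obtain ⟨-, hP4, -, hF4⟩ := H (π/4) hmem4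
    rw [psi2_eq] at hP2 hP4
    rw [dff2_eq d η ω₁ ω₃ v h11 h33 h13 h31 hc₁ hc₃] at hF2 hF4
    simp only [Real.sin_pi_div_two, Real.cos_pi_div_two] at hP2 hF2
    -- dω₃ = 0
    have hdω₃ : d ω₃ = 0 := by
      have : -(d ω₃) = 0 := by
        simpa using hP2
      simpa using this
    -- d(η∧ω₁) = 0
    have hdηω₁ : d (η * ω₁) = 0 := by
      have h2 : (2:ℝ) • d (η * ω₁) = 0 := by
        simpa using hF2
      exact smul_cancel (by norm_num) h2
    have hs4 : sin (π/4) = Real.sqrt 2 / 2 := Real.sin_pi_div_four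
    have hc4 : cos (π/4) = Real.sqrt 2 / 2 := Real.cos_pi_div_four
    have hsq2 : Real.sqrt 2 ^ 2 = 2 := Real.sq_sqrt (by norm_num)
    have hsne : Real.sqrt 2 ≠ 0 := by positivity
    rw [hs4, hc4, hdω₃] at hP4
    rw [hs4, hc4, hdηω₁] at hF4
    -- dω₁ = 3 η∧ω₂
    have hdω₁ : d ω₁ = (3:ℝ) • (η * ω₂) := by
      have key : (Real.sqrt 2 / 4) • (d ω₁ - (3:ℝ) • (η * ω₂)) = 0 := by
        rw [← hP4]
        match_scalars
        · linear_combination (-(Real.sqrt 2) / 8) * hsq2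
        · linear_combination (3 * Real.sqrt 2 / 8) * hsq2
      have := smul_cancel (by positivity) key
      exact sub_eq_zero.mp this
    refine ⟨hdηω₁, hdω₁, ?_, hdω₃⟩
    -- d(η∧ω₃) = -2 ω₁∧ω₁
    have key : (1/2 : ℝ) • (d (η * ω₃) - (-2:ℝ) • (ω₁ * ω₁)) = 0 := by
      rw [h11, ← hF4]
      match_scalars <;> nlinarith [hsq2]
    have := smul_cancel (by norm_num) key
    exact sub_eq_zero.mp this
  · rintro ⟨c1, c2, c3, c4⟩
    have hdηω₂ : d (η * ω₂) = 0 := by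
      have h0 : (3:ℝ) • d (η * ω₂) = 0 := by
        have := hdd ω₁
        rw [c2, map_smul] at this
        exact this
      exact smul_cancel (by norm_num) h0
    have hdv : d v = 0 := by
      have h0 : (-2:ℝ) • d v = 0 := by
        have := hdd (η * ω₃)
        rw [c3, map_smul, h11] at this
        exact this
      exact smul_cancel (by norm_num) h0
    have c3' : d (η * ω₃) = (-2:ℝ) • v := by rw [c3, h11]
    intro t ht
    refine ⟨?_, ?_, ?_, ?_⟩
    · rw [psi1_eq, hdηω₂, smul_zero]
    · rw [psi2_eq, c2, c4]
      module
    · rw [dff1_eq d η ω₁ ω₃ v h11 h33 h13 h31, hdv, smul_zero]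
    · rw [dff2_eq d η ω₁ ω₃ v h11 h33 h13 h31 hc₁ hc₃, c1, c3']
      module
end

section
/- Let e¹,…,e⁵ be a basis of a 5-dimensional Lie coalgebra with de¹ = 0, de² = μ e³⁴ + r e³⁵, de³ = -μ e²⁴ - r e²⁵, de⁴ = μ e¹⁴, de⁵ = (τ - μ²/r) e²³ - (μ²/r)(e¹⁴ - e²³), where r ≠ 0 and μ, τ ∈ ℝ. Then the SU(2)-structure η = e⁵, ω₁ = e¹² + e³⁴, ω₂ = e¹³ + e⁴², ω₃ = e¹⁴ + e²³ is hypo (dω₃ = 0, d(η∧ω₂) = 0, d(η∧ω₁) = 0), and it is double hypo (additionally dω₁ = 3η∧ω₂ and d(η∧ω₃) = -2ω₁∧ω₁) if and only if r = -3 and τ = -4 - μ²/3. -/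
private lemma swapL' {A : Type*} [Ring A] {x y : A} (h : y * x = -(x * y)) (v : A) :
    y * (x * v) = -(x * (y * v)) := by rw [← mul_assoc, h, neg_mul, mul_assoc]

private lemma selfL' {A : Type*} [Ring A] {x : A} (h : x * x = 0) (v : A) :
    x * (x * v) = 0 := by rw [← mul_assoc, h, zero_mul]

/-- On the 5-dimensional Lie algebra with Chevalley-Eilenberg differentials
`de¹ = 0`, `de² = μ e³⁴ + r e³⁵`, `de³ = -μ e²⁴ - r e²⁵`, `de⁴ = μ e¹⁴`,
`de⁵ = (τ - μ²/r) e²³ - (μ²/r)(e¹⁴ - e²³)` (with `r ≠ 0`), the SU(2)-structure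
`η = e⁵`, `ω₁ = e¹² + e³⁴`, `ω₂ = e¹³ + e⁴²`, `ω₃ = e¹⁴ + e²³` is always hypo
(`dω₃ = 0`, `d(η∧ω₂) = 0`, `d(η∧ω₁) = 0`), and it is double hypo
(additionally `dω₁ = 3η∧ω₂` and `d(η∧ω₃) = -2ω₁∧ω₁`) if and only if
`r = -3` and `τ = -4 - μ²/3`. -/
theorem lieAlgebra_hypo_and_doubleHypo_iff {A : Type*} [Ring A] [Algebra ℝ A]
    (μ r τ : ℝ) (hr : r ≠ 0)
    (d : A →ₗ[ℝ] A) (e₁ e₂ e₃ e₄ e₅ : A)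
    -- the 1-forms anticommute
    (hanti : ∀ x ∈ ({e₁, e₂, e₃, e₄, e₅} : Set A), ∀ y ∈ ({e₁, e₂, e₃, e₄, e₅} : Set A),
      x * y = -(y * x))
    -- antiderivation property on products of 1-forms and of a 1-form with a 2-form
    (hL2 : ∀ x ∈ ({e₁, e₂, e₃, e₄, e₅} : Set A), ∀ y ∈ ({e₁, e₂, e₃, e₄, e₅} : Set A),
      d (x * y) = d x * y - x * d y)
    (hL12 : ∀ x ∈ ({e₁, e₂, e₃, e₄, e₅} : Set A), ∀ y ∈ ({e₁, e₂, e₃, e₄, e₅} : Set A),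
      ∀ z ∈ ({e₁, e₂, e₃, e₄, e₅} : Set A),
      d (x * (y * z)) = d x * (y * z) - x * d (y * z))
    -- linear independence of the relevant basis monomials
    (hne : e₁ * e₂ * e₃ * e₄ ≠ 0)
    (hind : LinearIndependent ℝ ![e₁ * e₃ * e₅, e₂ * e₄ * e₅])
    -- structure equations
    (h1 : d e₁ = 0)
    (h2 : d e₂ = μ • (e₃ * e₄) + r • (e₃ * e₅))
    (h3 : d e₃ = -(μ • (e₂ * e₄)) - r • (e₂ * e₅))
    (h4 : d e₄ = μ • (e₁ * e₄))
    (h5 : d e₅ = (τ - μ ^ 2 / r) • (e₂ * e₃) - (μ ^ 2 / r) • (e₁ * e₄ - e₂ * e₃)) :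
    -- hypo for all parameters
    (d (e₁ * e₄ + e₂ * e₃) = 0 ∧
     d (e₅ * (e₁ * e₃ + e₄ * e₂)) = 0 ∧
     d (e₅ * (e₁ * e₂ + e₃ * e₄)) = 0) ∧
    -- double hypo iff r = -3 and τ = -4 - μ²/3
    ((d (e₁ * e₂ + e₃ * e₄) = (3 : ℝ) • (e₅ * (e₁ * e₃ + e₄ * e₂)) ∧
      d (e₅ * (e₁ * e₄ + e₂ * e₃))
        = (-2 : ℝ) • ((e₁ * e₂ + e₃ * e₄) * (e₁ * e₂ + e₃ * e₄))) ↔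
     (r = -3 ∧ τ = -4 - μ ^ 2 / 3)) := by
  have m1 : e₁ ∈ ({e₁, e₂, e₃, e₄, e₅} : Set A) := by simp
  have m2 : e₂ ∈ ({e₁, e₂, e₃, e₄, e₅} : Set A) := by simp
  have m3 : e₃ ∈ ({e₁, e₂, e₃, e₄, e₅} : Set A) := by simp
  have m4 : e₄ ∈ ({e₁, e₂, e₃, e₄, e₅} : Set A) := by simp
  have m5 : e₅ ∈ ({e₁, e₂, e₃, e₄, e₅} : Set A) := by simp
  have sq : ∀ x ∈ ({e₁, e₂, e₃, e₄, e₅} : Set A), x * x = 0 := by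
    intro x hx
    have h := hanti x hx x hx
    have h2 : (2 : ℝ) • (x * x) = 0 := by
      rw [two_smul]; nth_rewrite 2 [h]; simp
    have : x * x = (2 : ℝ)⁻¹ • ((2 : ℝ) • (x * x)) := by
      rw [smul_smul]; norm_num
    rw [this, h2, smul_zero]
  have s1 := sq e₁ m1
  have s2 := sq e₂ m2
  have s3 := sq e₃ m3
  have s4 := sq e₄ m4
  have s5 := sq e₅ m5
  have a21 : e₂ * e₁ = -(e₁ * e₂) := hanti _ m2 _ m1
  have a31 : e₃ * e₁ = -(e₁ * e₃) := hanti _ m3 _ m1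
  have a41 : e₄ * e₁ = -(e₁ * e₄) := hanti _ m4 _ m1
  have a51 : e₅ * e₁ = -(e₁ * e₅) := hanti _ m5 _ m1
  have a32 : e₃ * e₂ = -(e₂ * e₃) := hanti _ m3 _ m2
  have a42 : e₄ * e₂ = -(e₂ * e₄) := hanti _ m4 _ m2
  have a52 : e₅ * e₂ = -(e₂ * e₅) := hanti _ m5 _ m2
  have a43 : e₄ * e₃ = -(e₃ * e₄) := hanti _ m4 _ m3
  have a53 : e₅ * e₃ = -(e₃ * e₅) := hanti _ m5 _ m3
  have a54 : e₅ * e₄ = -(e₄ * e₅) := hanti _ m5 _ m4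
  have w21 := swapL' a21
  have w31 := swapL' a31
  have w41 := swapL' a41
  have w51 := swapL' a51
  have w32 := swapL' a32
  have w42 := swapL' a42
  have w52 := swapL' a52
  have w43 := swapL' a43
  have w53 := swapL' a53
  have w54 := swapL' a54
  have z1 := selfL' s1
  have z2 := selfL' s2
  have z3 := selfL' s3
  have z4 := selfL' s4
  have z5 := selfL' s5
  -- Hypo conditions
  have G1 : d (e₁ * e₄ + e₂ * e₃) = 0 := by
    rw [map_add, hL2 e₁ m1 e₄ m4, hL2 e₂ m2 e₃ m3, h1, h2, h3, h4]
    simp only [mul_add, add_mul, mul_sub, sub_mul, mul_neg, neg_mul, smul_add, smul_sub,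
      smul_neg, neg_neg, mul_smul_comm, smul_mul_assoc, smul_smul, mul_assoc,
      w21, w31, w41, w51, w32, w42, w52, w43, w53, w54,
      a21, a31, a41, a51, a32, a42, a52, a43, a53, a54,
      z1, z2, z3, z4, z5, s1, s2, s3, s4, s5,
      mul_zero, zero_mul, smul_zero, zero_smul, add_zero, zero_add, sub_zero, zero_sub,
      neg_zero, sub_self]
  have G2 : d (e₅ * (e₁ * e₃ + e₄ * e₂)) = 0 := by
    rw [mul_add, map_add, hL12 e₅ m5 e₁ m1 e₃ m3, hL12 e₅ m5 e₄ m4 e₂ m2,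
      hL2 e₁ m1 e₃ m3, hL2 e₄ m4 e₂ m2, h1, h2, h3, h4, h5]
    simp only [mul_add, add_mul, mul_sub, sub_mul, mul_neg, neg_mul, smul_add, smul_sub,
      smul_neg, neg_neg, mul_smul_comm, smul_mul_assoc, smul_smul, mul_assoc,
      w21, w31, w41, w51, w32, w42, w52, w43, w53, w54,
      a21, a31, a41, a51, a32, a42, a52, a43, a53, a54,
      z1, z2, z3, z4, z5, s1, s2, s3, s4, s5,
      mul_zero, zero_mul, smul_zero, zero_smul, add_zero, zero_add, sub_zero, zero_sub,
      neg_zero, sub_self]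
    module
  have G3 : d (e₅ * (e₁ * e₂ + e₃ * e₄)) = 0 := by
    rw [mul_add, map_add, hL12 e₅ m5 e₁ m1 e₂ m2, hL12 e₅ m5 e₃ m3 e₄ m4,
      hL2 e₁ m1 e₂ m2, hL2 e₃ m3 e₄ m4, h1, h2, h3, h4, h5]
    simp only [mul_add, add_mul, mul_sub, sub_mul, mul_neg, neg_mul, smul_add, smul_sub,
      smul_neg, neg_neg, mul_smul_comm, smul_mul_assoc, smul_smul, mul_assoc,
      w21, w31, w41, w51, w32, w42, w52, w43, w53, w54,
      a21, a31, a41, a51, a32, a42, a52, a43, a53, a54,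
      z1, z2, z3, z4, z5, s1, s2, s3, s4, s5,
      mul_zero, zero_mul, smul_zero, zero_smul, add_zero, zero_add, sub_zero, zero_sub,
      neg_zero, sub_self]
    module
  -- Key normal forms for the double-hypo equations
  have eqA : d (e₁ * e₂ + e₃ * e₄) - (3 : ℝ) • (e₅ * (e₁ * e₃ + e₄ * e₂))
      = (-(r + 3)) • (e₁ * (e₃ * e₅)) + (r + 3) • (e₂ * (e₄ * e₅)) := by
    rw [map_add, hL2 e₁ m1 e₂ m2, hL2 e₃ m3 e₄ m4, h1, h2, h3, h4]
    simp only [mul_add, add_mul, mul_sub, sub_mul, mul_neg, neg_mul, smul_add, smul_sub,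
      smul_neg, neg_neg, mul_smul_comm, smul_mul_assoc, smul_smul, mul_assoc,
      w21, w31, w41, w51, w32, w42, w52, w43, w53, w54,
      a21, a31, a41, a51, a32, a42, a52, a43, a53, a54,
      z1, z2, z3, z4, z5, s1, s2, s3, s4, s5,
      mul_zero, zero_mul, smul_zero, zero_smul, add_zero, zero_add, sub_zero, zero_sub,
      neg_zero]
    module
  have eqB : d (e₅ * (e₁ * e₄ + e₂ * e₃))
      - (-2 : ℝ) • ((e₁ * e₂ + e₃ * e₄) * (e₁ * e₂ + e₃ * e₄))
      = (τ - μ ^ 2 / r + 4) • (e₁ * (e₂ * (e₃ * e₄))) := by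
    rw [mul_add, map_add, hL12 e₅ m5 e₁ m1 e₄ m4, hL12 e₅ m5 e₂ m2 e₃ m3,
      hL2 e₁ m1 e₄ m4, hL2 e₂ m2 e₃ m3, h1, h2, h3, h4, h5]
    simp only [mul_add, add_mul, mul_sub, sub_mul, mul_neg, neg_mul, smul_add, smul_sub,
      smul_neg, neg_neg, mul_smul_comm, smul_mul_assoc, smul_smul, mul_assoc,
      w21, w31, w41, w51, w32, w42, w52, w43, w53, w54,
      a21, a31, a41, a51, a32, a42, a52, a43, a53, a54,
      z1, z2, z3, z4, z5, s1, s2, s3, s4, s5,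
      mul_zero, zero_mul, smul_zero, zero_smul, add_zero, zero_add, sub_zero, zero_sub,
      neg_zero]
    module
  refine ⟨⟨G1, G2, G3⟩, ?_⟩
  constructor
  · rintro ⟨hD1, hD2⟩
    have h0 : (-(r + 3)) • (e₁ * e₃ * e₅) + (r + 3) • (e₂ * e₄ * e₅) = 0 := by
      rw [mul_assoc, mul_assoc, ← eqA, hD1, sub_self]
    obtain ⟨hA, hB⟩ := LinearIndependent.pair_iff.mp hind _ _ h0
    have hr3 : r = -3 := by linarith
    have h0' : (τ - μ ^ 2 / r + 4) • (e₁ * (e₂ * (e₃ * e₄))) = 0 := by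
      rw [← eqB, hD2, sub_self]
    have hc : τ - μ ^ 2 / r + 4 = 0 := by
      by_contra hc
      apply hne
      have : e₁ * e₂ * e₃ * e₄
          = (τ - μ ^ 2 / r + 4)⁻¹ • ((τ - μ ^ 2 / r + 4) • (e₁ * (e₂ * (e₃ * e₄)))) := by
        rw [smul_smul, inv_mul_cancel₀ hc, one_smul, mul_assoc, mul_assoc]
      rw [this, h0', smul_zero]
    refine ⟨hr3, ?_⟩
    rw [hr3] at hc
    have hdiv : μ ^ 2 / (-3 : ℝ) = -(μ ^ 2 / 3) := by ring
    rw [hdiv] at hc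
    linarith
  · rintro ⟨hr3, hτ⟩
    refine ⟨eq_of_sub_eq_zero ?_, eq_of_sub_eq_zero ?_⟩
    · rw [eqA, hr3]
      module
    · rw [eqB, hr3, hτ]
      have : (-4 - μ ^ 2 / 3 - μ ^ 2 / (-3 : ℝ) + 4) = 0 := by ring
      rw [this, zero_smul]
end

section
/- Let (F, Ψ₊, Ψ₋) be a nearly Kähler SU(3)-structure on M⁶, i.e. dF = 3Ψ₊ and dΨ₋ = -2F∧F. Define on M⁶ × ℝ (coordinate q) the family F(q) = sin²q F, Ψ₊(q) = sin³q(sin q Ψ₊ + cos q Ψ₋), Ψ₋(q) = sin³q(-cos q Ψ₊ + sin q Ψ₋). Then: (a) each structure is nearly half flat, dΨ₋(q) = -2F(q)∧F(q); (b) the evolution equations ∂_q Ψ₋(q) = 4Ψ₊(q) - dF(q) and dΨ₊(q) = -½ ∂_q(F(q)∧F(q)) hold. -/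
open Real

/-! Since `d² = 0` and `dF = 3Ψ₊`, the form `Ψ₊` is closed. Every form of the family is a
combination of the constant forms `Ψ₊`, `Ψ₋`, `F`, `F ∧ F` with coefficients polynomial in
`sin q`, `cos q`, and `d` sees only the constant forms; so after substituting `dΨ₊ = 0`,
`dF = 3Ψ₊`, `dΨ₋ = -2F ∧ F` each identity reduces to a trigonometric identity, the only
non-polynomial one being `sin² q + cos² q = 1`. -/

theorem LinearMap.map_eq_zero_of_map_eq_smul {K M : Type*} [Field K] [AddCommGroup M]
    [Module K M] (d : M →ₗ[K] M) (hdd : ∀ x, d (d x) = 0) {x y : M} {c : K} (hc : c ≠ 0)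
    (hxy : d x = c • y) : d y = 0 := by
  have h := hdd x
  rw [hxy, map_smul] at h
  exact (smul_eq_zero.mp h).resolve_left hc

theorem hasDerivAt_sin_pow_three_smul_rotation {E : Type*} [NormedAddCommGroup E]
    [NormedSpace ℝ E] (a b : E) (q : ℝ) :
    HasDerivAt (fun s : ℝ => sin s ^ 3 • (-(cos s) • a + sin s • b))
      ((4 * sin q ^ 4 - 3 * sin q ^ 2) • a + (4 * sin q ^ 3 * cos q) • b) q := by
  have hexpand : (fun s : ℝ => sin s ^ 3 • (-(cos s) • a + sin s • b))
      = fun s => (-(sin s ^ 3 * cos s)) • a + sin s ^ 4 • b := by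
    funext s
    match_scalars <;> ring
  have hcoeff_a : HasDerivAt (fun s => -(sin s ^ 3 * cos s))
      (-(3 * sin q ^ 2 * cos q * cos q + sin q ^ 3 * -sin q)) q :=
    (((hasDerivAt_sin q).pow 3).mul (hasDerivAt_cos q)).neg
  have hcoeff_b : HasDerivAt (fun s => sin s ^ 4) (4 * sin q ^ 3 * cos q) q := by
    simpa using (hasDerivAt_sin q).fun_pow 4
  rw [hexpand]
  refine ((hcoeff_a.smul_const a).add (hcoeff_b.smul_const b)).congr_deriv ?_
  match_scalars
  · linear_combination (-3 * sin q ^ 2) * sin_sq_add_cos_sq q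
  · ring

theorem hasDerivAt_sin_sq_smul_mul_self {A : Type*} [NormedRing A] [NormedAlgebra ℝ A]
    (x : A) (q : ℝ) :
    HasDerivAt (fun s : ℝ => (sin s ^ 2 • x) * (sin s ^ 2 • x))
      ((4 * sin q ^ 3 * cos q) • (x * x)) q := by
  have hexpand : (fun s : ℝ => (sin s ^ 2 • x) * (sin s ^ 2 • x))
      = fun s => sin s ^ 4 • (x * x) := by
    funext s
    rw [smul_mul_smul_comm, ← pow_add]
  rw [hexpand]
  simpa using ((hasDerivAt_sin q).fun_pow 4).smul_const (x * x)

/-- `A` stands for the de Rham algebra of `M⁶` with `*` as wedge product; the `q`-dependence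
is carried by real coefficients, on which `d` does not act. -/
theorem nearlyKaehler_family_nearlyHalfFlat_evolution {A : Type*}
    [NormedRing A] [NormedAlgebra ℝ A]
    (d : A →ₗ[ℝ] A) (F Ψp Ψm : A)
    (hdd : ∀ x : A, d (d x) = 0)
    -- nearly Kähler equations
    (hNK₁ : d F = (3 : ℝ) • Ψp)
    (hNK₂ : d Ψm = (-2 : ℝ) • (F * F)) :
    -- (a) nearly half flat for every q
    (∀ q : ℝ, d (sin q ^ 3 • (-(cos q) • Ψp + sin q • Ψm))
        = (-2 : ℝ) • ((sin q ^ 2 • F) * (sin q ^ 2 • F))) ∧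
    -- (b) evolution nearly half flat equations
    (∀ q : ℝ, deriv (fun s : ℝ => sin s ^ 3 • (-(cos s) • Ψp + sin s • Ψm)) q
        = (4 : ℝ) • (sin q ^ 3 • (sin q • Ψp + cos q • Ψm)) - d (sin q ^ 2 • F)) ∧
    (∀ q : ℝ, d (sin q ^ 3 • (sin q • Ψp + cos q • Ψm))
        = (-(1 : ℝ) / 2) •
            deriv (fun s : ℝ => (sin s ^ 2 • F) * (sin s ^ 2 • F)) q) := by
  have hΨp_closed : d Ψp = 0 := d.map_eq_zero_of_map_eq_smul hdd three_ne_zero hNK₁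
  refine ⟨fun q => ?_, fun q => ?_, fun q => ?_⟩
  · rw [map_smul, map_add, map_smul, map_smul, hΨp_closed, hNK₂, smul_mul_smul_comm]
    (match_scalars; ring)
  · rw [(hasDerivAt_sin_pow_three_smul_rotation Ψp Ψm q).deriv, map_smul, hNK₁]
    match_scalars <;> ring
  · rw [(hasDerivAt_sin_sq_smul_mul_self F q).deriv, map_smul, map_add, map_smul, map_smul,
      hΨp_closed, hNK₂]
    match_scalars
    ring
end

section
/- On S⁵ ⊂ ℝ⁶, let ω₁ = x₃dx₁₂ - x₂dx₁₃ + x₁dx₂₃ + x₅dx₁₄ - x₄dx₁₅ + x₁dx₄₅ + x₆dx₂₄ - x₄dx₂₆ + x₂dx₄₆ + x₅dx₃₆ - x₆dx₃₅ - x₃dx₅₆, η = x₆dx₁ - x₁dx₆ + x₂dx₅ - x₅dx₂ + x₃dx₄ - x₄dx₃, and ω₂ = -x₄dx₁₂ + x₅dx₁₃ + x₂dx₁₄ - x₃dx₁₅ + x₆dx₂₃ - x₁dx₂₄ - x₃dx₂₆ + x₁dx₃₅ + x₂dx₃₆ + x₆dx₄₅ - x₅dx₄₆ + x₄dx₅₆,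 where dxᵢⱼ = dxᵢ∧dxⱼ. Then, modulo the relation Σᵢ xᵢ dxᵢ = 0 (valid on S⁵ where Σxᵢ² = 1), one has dω₁ = 3η∧ω₂. -/
noncomputable section

/-- `dxij i j u v` is the 2-form `dxᵢ ∧ dxⱼ` evaluated on the vectors `u, v`. -/
def dxij (i j : Fin 6) (u v : EuclideanSpace ℝ (Fin 6)) : ℝ := u i * v j - u j * v i

/-- The contact form `η = x₆dx₁ - x₁dx₆ + x₂dx₅ - x₅dx₂ + x₃dx₄ - x₄dx₃` on `S⁵`
(coordinates indexed `0,…,5`), evaluated at `x` on the vector `u`. -/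
def etaS5 (x u : EuclideanSpace ℝ (Fin 6)) : ℝ :=
  x 5 * u 0 - x 0 * u 5 + x 1 * u 4 - x 4 * u 1 + x 2 * u 3 - x 3 * u 2

/-- `ω₁ = x₃dx₁₂ - x₂dx₁₃ + x₁dx₂₃ + x₅dx₁₄ - x₄dx₁₅ + x₁dx₄₅ + x₆dx₂₄ - x₄dx₂₆ + x₂dx₄₆
+ x₅dx₃₆ - x₆dx₃₅ - x₃dx₅₆`, evaluated at `x` on `(u, v)`. -/
def omega1S5 (x u v : EuclideanSpace ℝ (Fin 6)) : ℝ :=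
  x 2 * dxij 0 1 u v - x 1 * dxij 0 2 u v + x 0 * dxij 1 2 u v
  + x 4 * dxij 0 3 u v - x 3 * dxij 0 4 u v + x 0 * dxij 3 4 u v
  + x 5 * dxij 1 3 u v - x 3 * dxij 1 5 u v + x 1 * dxij 3 5 u v
  + x 4 * dxij 2 5 u v - x 5 * dxij 2 4 u v - x 2 * dxij 4 5 u v

/-- `ω₂ = -x₄dx₁₂ + x₅dx₁₃ + x₂dx₁₄ - x₃dx₁₅ + x₆dx₂₃ - x₁dx₂₄ - x₃dx₂₆ + x₁dx₃₅ + x₂dx₃₆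
+ x₆dx₄₅ - x₅dx₄₆ + x₄dx₅₆`, evaluated at `x` on `(u, v)`. -/
def omega2S5 (x u v : EuclideanSpace ℝ (Fin 6)) : ℝ :=
  -(x 3) * dxij 0 1 u v + x 4 * dxij 0 2 u v + x 1 * dxij 0 3 u v
  - x 2 * dxij 0 4 u v + x 5 * dxij 1 2 u v - x 0 * dxij 1 3 u v
  - x 2 * dxij 1 5 u v + x 0 * dxij 2 4 u v + x 1 * dxij 2 5 u v
  + x 5 * dxij 3 4 u v - x 4 * dxij 3 5 u v + x 3 * dxij 4 5 u v

lemma coord_hasFDerivAt (i : Fin 6) (x : EuclideanSpace ℝ (Fin 6)) :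
    HasFDerivAt (fun y : EuclideanSpace ℝ (Fin 6) => y i)
      (EuclideanSpace.proj i : EuclideanSpace ℝ (Fin 6) →L[ℝ] ℝ) x :=
  (EuclideanSpace.proj i (𝕜 := ℝ)).hasFDerivAt

lemma fderiv_omega1 (x u a b : EuclideanSpace ℝ (Fin 6)) :
    fderiv ℝ (fun y => omega1S5 y a b) x u = omega1S5 u a b := by
  have h : HasFDerivAt (fun y => omega1S5 y a b)
      ((dxij 0 1 a b) • (EuclideanSpace.proj 2 : EuclideanSpace ℝ (Fin 6) →L[ℝ] ℝ)
      - (dxij 0 2 a b) • EuclideanSpace.proj 1 + (dxij 1 2 a b) • EuclideanSpace.proj 0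
      + (dxij 0 3 a b) • EuclideanSpace.proj 4 - (dxij 0 4 a b) • EuclideanSpace.proj 3
      + (dxij 3 4 a b) • EuclideanSpace.proj 0
      + (dxij 1 3 a b) • EuclideanSpace.proj 5 - (dxij 1 5 a b) • EuclideanSpace.proj 3
      + (dxij 3 5 a b) • EuclideanSpace.proj 1
      + (dxij 2 5 a b) • EuclideanSpace.proj 4 - (dxij 2 4 a b) • EuclideanSpace.proj 5
      - (dxij 4 5 a b) • EuclideanSpace.proj 2) x := by
    unfold omega1S5
    exact ((((((((((((coord_hasFDerivAt 2 x).mul_const _).sub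
      ((coord_hasFDerivAt 1 x).mul_const _)).add ((coord_hasFDerivAt 0 x).mul_const _)).add
      ((coord_hasFDerivAt 4 x).mul_const _)).sub ((coord_hasFDerivAt 3 x).mul_const _)).add
      ((coord_hasFDerivAt 0 x).mul_const _)).add ((coord_hasFDerivAt 5 x).mul_const _)).sub
      ((coord_hasFDerivAt 3 x).mul_const _)).add ((coord_hasFDerivAt 1 x).mul_const _)).add
      ((coord_hasFDerivAt 4 x).mul_const _)).sub ((coord_hasFDerivAt 5 x).mul_const _)).sub
      ((coord_hasFDerivAt 2 x).mul_const _)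
  rw [h.fderiv]
  simp [omega1S5, EuclideanSpace.proj]
  ring

/-- On the unit sphere `S⁵ ⊂ ℝ⁶` (i.e. modulo the relations `Σxᵢ² = 1` and
`Σxᵢdxᵢ = 0`, the latter imposed by evaluating only on tangent vectors `u, v, w`), one has
`dω₁ = 3η∧ω₂`.  Here `dω₁(u,v,w) = ∂_u ω₁(v,w) - ∂_v ω₁(u,w) + ∂_w ω₁(u,v)` for constant
vector fields, and `(η∧ω₂)(u,v,w) = η(u)ω₂(v,w) - η(v)ω₂(u,w) + η(w)ω₂(u,v)`. -/
theorem sphere_domega1_eq_three_eta_wedge_omega2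
    (x u v w : EuclideanSpace ℝ (Fin 6))
    (hx : ∑ i, x i ^ 2 = 1)
    (hu : ∑ i, x i * u i = 0) (hv : ∑ i, x i * v i = 0) (hw : ∑ i, x i * w i = 0) :
    fderiv ℝ (fun y => omega1S5 y v w) x u - fderiv ℝ (fun y => omega1S5 y u w) x v
      + fderiv ℝ (fun y => omega1S5 y u v) x w
    = 3 * (etaS5 x u * omega2S5 x v w - etaS5 x v * omega2S5 x u w
        + etaS5 x w * omega2S5 x u v) := by
  rw [fderiv_omega1, fderiv_omega1, fderiv_omega1]
  simp only [Fin.sum_univ_six] at hx hu hv hw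
  unfold omega1S5 omega2S5 etaS5 dxij
  linear_combination
    (-3*((u 0*(v 1*w 2 - v 2*w 1) - v 0*(u 1*w 2 - u 2*w 1) + w 0*(u 1*v 2 - u 2*v 1)) + (u 0*(v 3*w 4 - v 4*w 3) - v 0*(u 3*w 4 - u 4*w 3) + w 0*(u 3*v 4 - u 4*v 3)) + (u 1*(v 3*w 5 - v 5*w 3) - v 1*(u 3*w 5 - u 5*w 3) + w 1*(u 3*v 5 - u 5*v 3)) - (u 2*(v 4*w 5 - v 5*w 4) - v 2*(u 4*w 5 - u 5*w 4) + w 2*(u 4*v 5 - u 5*v 4)))) * hx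
    + (3 * (x 2*(v 0*w 1 - v 1*w 0) - x 1*(v 0*w 2 - v 2*w 0) + x 0*(v 1*w 2 - v 2*w 1) + x 4*(v 0*w 3 - v 3*w 0) - x 3*(v 0*w 4 - v 4*w 0) + x 0*(v 3*w 4 - v 4*w 3) + x 5*(v 1*w 3 - v 3*w 1) - x 3*(v 1*w 5 - v 5*w 1) + x 1*(v 3*w 5 - v 5*w 3) + x 4*(v 2*w 5 - v 5*w 2) - x 5*(v 2*w 4 - v 4*w 2) - x 2*(v 4*w 5 - v 5*w 4))) * hu
    - (3 * (x 2*(u 0*w 1 - u 1*w 0) - x 1*(u 0*w 2 - u 2*w 0) + x 0*(u 1*w 2 - u 2*w 1) + x 4*(u 0*w 3 - u 3*w 0) - x 3*(u 0*w 4 - u 4*w 0) + x 0*(u 3*w 4 - u 4*w 3) + x 5*(u 1*w 3 - u 3*w 1) - x 3*(u 1*w 5 - u 5*w 1) + x 1*(u 3*w 5 - u 5*w 3) + x 4*(u 2*w 5 - u 5*w 2) - x 5*(u 2*w 4 - u 4*w 2) - x 2*(u 4*w 5 - u 5*w 4))) * hv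
    + (3 * (x 2*(u 0*v 1 - u 1*v 0) - x 1*(u 0*v 2 - u 2*v 0) + x 0*(u 1*v 2 - u 2*v 1) + x 4*(u 0*v 3 - u 3*v 0) - x 3*(u 0*v 4 - u 4*v 0) + x 0*(u 3*v 4 - u 4*v 3) + x 5*(u 1*v 3 - u 3*v 1) - x 3*(u 1*v 5 - u 5*v 1) + x 1*(u 3*v 5 - u 5*v 3) + x 4*(u 2*v 5 - u 5*v 2) - x 5*(u 2*v 4 - u 4*v 2) - x 2*(u 4*v 5 - u 5*v 4))) * hw

end
end

section
/- Let α₁, α₂, α₃ and β₁, β₂, β₃ be two copies of the standard left-invariant coframe on S³ satisfying dα₁ = -α₂∧α₃, dα₂ = α₁∧α₃, dα₃ = -α₁∧α₂ and the same relations for the βⱼ, with dαᵢ∧βⱼ-type products given by the product structure (dβⱼ involves only β's). Define μⱼ = (1/3)(αⱼ + e^{2πi/3}βⱼ), F = (i/2)Σⱼ μⱼ∧μ̄ⱼ and Ψ = Ψ₊ + iΨ₋ = i μ₁∧μ₂∧μ₃. Then dF = 3Ψ₊ and dΨ₋ = -2F∧F, i.e. this SU(3)-structure on S³×S³ is nearly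 Kähler. -/
private lemma sqz {A : Type*} [Ring A] [Algebra ℝ A] (x : A) (h : x * x = -(x * x)) :
    x * x = 0 := by
  have h2 : (2:ℝ) • (x*x) = 0 := by
    rw [two_smul]; nth_rewrite 1 [h]; exact neg_add_cancel _
  have := congrArg (fun z => (1/2:ℝ) • z) h2
  simpa [smul_smul] using this

private lemma l1 {A : Type*} [Ring A] (x y : A) (h : y * x = -(x * y)) (hx : x * x = 0) :
    (x * y) * x = 0 := by
  calc (x*y)*x = x*(y*x) := by noncomm_ring
  _ = x*(-(x*y)) := by rw [h]
  _ = -((x*x)*y) := by noncomm_ring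
  _ = 0 := by rw [hx, zero_mul, neg_zero]

private lemma l2 {A : Type*} [Ring A] (x y : A) (hx : x * x = 0) : x * (x * y) = 0 := by
  rw [← mul_assoc, hx, zero_mul]

private lemma l3 {A : Type*} [Ring A] (x y : A) (hy : y * y = 0) : (x * y) * y = 0 := by
  rw [mul_assoc, hy, mul_zero]

private lemma l4 {A : Type*} [Ring A] (x y : A) (h : y * x = -(x * y)) (hx : x * x = 0) :
    x * (y * x) = 0 := by
  rw [h, mul_neg, ← mul_assoc, hx, zero_mul, neg_zero]

private lemma l5 {A : Type*} [Ring A] (x y : A) (h : y * x = -(x * y)) (hx : x * x = 0) :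
    (x * y) * (x * y) = 0 := by
  calc (x*y)*(x*y) = x*((y*x)*y) := by noncomm_ring
  _ = x*((-(x*y))*y) := by rw [h]
  _ = -((x*x)*(y*y)) := by noncomm_ring
  _ = 0 := by rw [hx, zero_mul, neg_zero]

private lemma swap4 {A : Type*} [Ring A] (a b c e : A) (h : b * c = -(c * b)) :
    (a * b) * (c * e) = -((a * c) * (b * e)) := by
  calc (a*b)*(c*e) = a*((b*c)*e) := by noncomm_ring
  _ = a*((-(c*b))*e) := by rw [h]
  _ = -((a*c)*(b*e)) := by noncomm_ring

set_option maxHeartbeats 2000000 in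
/-- Let `α₁, α₂, α₃` and `β₁, β₂, β₃` be the two standard left-invariant
coframes on `S³ × S³`, with `dα₁ = -α₂∧α₃`, `dα₂ = α₁∧α₃`, `dα₃ = -α₁∧α₂` and the same
relations for the `βⱼ`.  In real terms, the SU(3)-structure
`F = (√3/18)(α₁∧β₁ + α₂∧β₂ + α₃∧β₃)`,
`Ψ₊ = (√3/54)(-α₁₂∧β₃ + α₁₃∧β₂ - α₂₃∧β₁ + α₁∧β₂₃ - α₂∧β₁₃ + α₃∧β₁₂)`,
`Ψ₋ = (1/54)(2α₁₂₃ - α₁₂∧β₃ + α₁₃∧β₂ - α₂₃∧β₁ - α₁∧β₂₃ + α₂∧β₁₃ - α₃∧β₁₂ + 2β₁₂₃)`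
is nearly Kähler: `dF = 3Ψ₊` and `dΨ₋ = -2F∧F`.

The computation is in the Chevalley-Eilenberg complex of `su(2) ⊕ su(2)`: `A` is its exterior
algebra (product written `*`), the six generators anticommute, and `d` is the antiderivation
determined by the structure equations. -/
theorem s3s3_nearlyKaehler {A : Type*} [Ring A] [Algebra ℝ A]
    (d : A →ₗ[ℝ] A) (α₁ α₂ α₃ β₁ β₂ β₃ : A)
    -- the 1-forms anticommute
    (hanti : ∀ x ∈ ({α₁, α₂, α₃, β₁, β₂, β₃} : Set A),
      ∀ y ∈ ({α₁, α₂, α₃, β₁, β₂, β₃} : Set A), x * y = -(y * x))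
    -- antiderivation property on products of generators
    (hL2 : ∀ x ∈ ({α₁, α₂, α₃, β₁, β₂, β₃} : Set A),
      ∀ y ∈ ({α₁, α₂, α₃, β₁, β₂, β₃} : Set A),
      d (x * y) = d x * y - x * d y)
    (hL12 : ∀ x ∈ ({α₁, α₂, α₃, β₁, β₂, β₃} : Set A),
      ∀ y ∈ ({α₁, α₂, α₃, β₁, β₂, β₃} : Set A),
      ∀ z ∈ ({α₁, α₂, α₃, β₁, β₂, β₃} : Set A),
      d (x * (y * z)) = d x * (y * z) - x * d (y * z))
    (hL21 : ∀ x ∈ ({α₁, α₂, α₃, β₁, β₂, β₃} : Set A),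
      ∀ y ∈ ({α₁, α₂, α₃, β₁, β₂, β₃} : Set A),
      ∀ z ∈ ({α₁, α₂, α₃, β₁, β₂, β₃} : Set A),
      d ((x * y) * z) = d (x * y) * z + (x * y) * d z)
    -- structure equations of su(2) ⊕ su(2)
    (hα₁ : d α₁ = -(α₂ * α₃)) (hα₂ : d α₂ = α₁ * α₃) (hα₃ : d α₃ = -(α₁ * α₂))
    (hβ₁ : d β₁ = -(β₂ * β₃)) (hβ₂ : d β₂ = β₁ * β₃) (hβ₃ : d β₃ = -(β₁ * β₂)) :
    d ((Real.sqrt 3 / 18) • (α₁ * β₁ + α₂ * β₂ + α₃ * β₃))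
      = (3 : ℝ) • ((Real.sqrt 3 / 54) •
          (-(α₁ * α₂ * β₃) + α₁ * α₃ * β₂ - α₂ * α₃ * β₁
            + α₁ * (β₂ * β₃) - α₂ * (β₁ * β₃) + α₃ * (β₁ * β₂))) ∧
    d (((1 : ℝ) / 54) •
        ((2 : ℝ) • (α₁ * α₂ * α₃) - α₁ * α₂ * β₃ + α₁ * α₃ * β₂ - α₂ * α₃ * β₁
          - α₁ * (β₂ * β₃) + α₂ * (β₁ * β₃) - α₃ * (β₁ * β₂)
          + (2 : ℝ) • (β₁ * β₂ * β₃)))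
      = (-2 : ℝ) • (((Real.sqrt 3 / 18) • (α₁ * β₁ + α₂ * β₂ + α₃ * β₃))
          * ((Real.sqrt 3 / 18) • (α₁ * β₁ + α₂ * β₂ + α₃ * β₃))) := by
  have m1 : α₁ ∈ ({α₁, α₂, α₃, β₁, β₂, β₃} : Set A) := by simp
  have m2 : α₂ ∈ ({α₁, α₂, α₃, β₁, β₂, β₃} : Set A) := by simp
  have m3 : α₃ ∈ ({α₁, α₂, α₃, β₁, β₂, β₃} : Set A) := by simp
  have n1 : β₁ ∈ ({α₁, α₂, α₃, β₁, β₂, β₃} : Set A) := by simp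
  have n2 : β₂ ∈ ({α₁, α₂, α₃, β₁, β₂, β₃} : Set A) := by simp
  have n3 : β₃ ∈ ({α₁, α₂, α₃, β₁, β₂, β₃} : Set A) := by simp
  -- squares vanish
  have s1 : α₁ * α₁ = 0 := sqz _ (hanti _ m1 _ m1)
  have s2 : α₂ * α₂ = 0 := sqz _ (hanti _ m2 _ m2)
  have s3 : α₃ * α₃ = 0 := sqz _ (hanti _ m3 _ m3)
  have t1 : β₁ * β₁ = 0 := sqz _ (hanti _ n1 _ n1)
  have t2 : β₂ * β₂ = 0 := sqz _ (hanti _ n2 _ n2)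
  have t3 : β₃ * β₃ = 0 := sqz _ (hanti _ n3 _ n3)
  -- anticommutation instances
  have hα12 : α₁ * α₂ = -(α₂ * α₁) := hanti _ m1 _ m2
  have hα21 : α₂ * α₁ = -(α₁ * α₂) := hanti _ m2 _ m1
  have hα31 : α₃ * α₁ = -(α₁ * α₃) := hanti _ m3 _ m1
  have hα32 : α₃ * α₂ = -(α₂ * α₃) := hanti _ m3 _ m2
  have hβ12 : β₁ * β₂ = -(β₂ * β₁) := hanti _ n1 _ n2
  have hβ21 : β₂ * β₁ = -(β₁ * β₂) := hanti _ n2 _ n1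
  have hβ31 : β₃ * β₁ = -(β₁ * β₃) := hanti _ n3 _ n1
  have hβ32 : β₃ * β₂ = -(β₂ * β₃) := hanti _ n3 _ n2
  have hb1a1 : β₁ * α₁ = -(α₁ * β₁) := hanti _ n1 _ m1
  have hb2a2 : β₂ * α₂ = -(α₂ * β₂) := hanti _ n2 _ m2
  have hb3a3 : β₃ * α₃ = -(α₃ * β₃) := hanti _ n3 _ m3
  have hb1a2 : β₁ * α₂ = -(α₂ * β₁) := hanti _ n1 _ m2
  have hb1a3 : β₁ * α₃ = -(α₃ * β₁) := hanti _ n1 _ m3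
  have hb2a1 : β₂ * α₁ = -(α₁ * β₂) := hanti _ n2 _ m1
  have hb2a3 : β₂ * α₃ = -(α₃ * β₂) := hanti _ n2 _ m3
  have hb3a1 : β₃ * α₁ = -(α₁ * β₃) := hanti _ n3 _ m1
  have hb3a2 : β₃ * α₂ = -(α₂ * β₃) := hanti _ n3 _ m2
  -- d of degree-2 generator products vanishes
  have dA12 : d (α₁ * α₂) = 0 := by
    rw [hL2 _ m1 _ m2, hα₁, hα₂, neg_mul, l1 _ _ hα32 s2, l2 _ _ s1, neg_zero, sub_self]
  have dA13 : d (α₁ * α₃) = 0 := by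
    rw [hL2 _ m1 _ m3, hα₁, hα₃, neg_mul, l3 _ _ s3, mul_neg, l2 _ _ s1, neg_zero, sub_self]
  have dA23 : d (α₂ * α₃) = 0 := by
    rw [hL2 _ m2 _ m3, hα₂, hα₃, l3 _ _ s3, mul_neg, l4 _ _ hα12 s2, neg_zero, sub_self]
  have dB12 : d (β₁ * β₂) = 0 := by
    rw [hL2 _ n1 _ n2, hβ₁, hβ₂, neg_mul, l1 _ _ hβ32 t2, l2 _ _ t1, neg_zero, sub_self]
  have dB13 : d (β₁ * β₃) = 0 := by
    rw [hL2 _ n1 _ n3, hβ₁, hβ₃, neg_mul, l3 _ _ t3, mul_neg, l2 _ _ t1, neg_zero, sub_self]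
  have dB23 : d (β₂ * β₃) = 0 := by
    rw [hL2 _ n2 _ n3, hβ₂, hβ₃, l3 _ _ t3, mul_neg, l4 _ _ hβ12 t2, neg_zero, sub_self]
  -- dF computations
  have dF1 : d (α₁ * β₁) = -((α₂ * α₃) * β₁) + α₁ * (β₂ * β₃) := by
    rw [hL2 _ m1 _ n1, hα₁, hβ₁]; noncomm_ring
  have dF2 : d (α₂ * β₂) = (α₁ * α₃) * β₂ - α₂ * (β₁ * β₃) := by
    rw [hL2 _ m2 _ n2, hα₂, hβ₂]
  have dF3 : d (α₃ * β₃) = -((α₁ * α₂) * β₃) + α₃ * (β₁ * β₂) := by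
    rw [hL2 _ m3 _ n3, hα₃, hβ₃]; noncomm_ring
  -- d of the 3-forms
  have d123a : d (α₁ * α₂ * α₃) = 0 := by
    rw [hL21 _ m1 _ m2 _ m3, dA12, hα₃, zero_mul, mul_neg, l5 _ _ hα21 s1, neg_zero, add_zero]
  have d123b : d (β₁ * β₂ * β₃) = 0 := by
    rw [hL21 _ n1 _ n2 _ n3, dB12, hβ₃, zero_mul, mul_neg, l5 _ _ hβ21 t1, neg_zero, add_zero]
  have dT1 : d (α₁ * α₂ * β₃) = -((α₁ * α₂) * (β₁ * β₂)) := by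
    rw [hL21 _ m1 _ m2 _ n3, dA12, hβ₃, zero_mul, mul_neg, zero_add]
  have dT2 : d (α₁ * α₃ * β₂) = (α₁ * α₃) * (β₁ * β₃) := by
    rw [hL21 _ m1 _ m3 _ n2, dA13, hβ₂, zero_mul, zero_add]
  have dT3 : d (α₂ * α₃ * β₁) = -((α₂ * α₃) * (β₂ * β₃)) := by
    rw [hL21 _ m2 _ m3 _ n1, dA23, hβ₁, zero_mul, mul_neg, zero_add]
  have dT4 : d (α₁ * (β₂ * β₃)) = -((α₂ * α₃) * (β₂ * β₃)) := by
    rw [hL12 _ m1 _ n2 _ n3, hα₁, dB23, mul_zero, sub_zero, neg_mul]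
  have dT5 : d (α₂ * (β₁ * β₃)) = (α₁ * α₃) * (β₁ * β₃) := by
    rw [hL12 _ m2 _ n1 _ n3, hα₂, dB13, mul_zero, sub_zero]
  have dT6 : d (α₃ * (β₁ * β₂)) = -((α₁ * α₂) * (β₁ * β₂)) := by
    rw [hL12 _ m3 _ n1 _ n2, hα₃, dB12, mul_zero, sub_zero, neg_mul]
  -- products of the Kähler-form terms
  have e11 : (α₁ * β₁) * (α₁ * β₁) = 0 := l5 _ _ hb1a1 s1
  have e22 : (α₂ * β₂) * (α₂ * β₂) = 0 := l5 _ _ hb2a2 s2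
  have e33 : (α₃ * β₃) * (α₃ * β₃) = 0 := l5 _ _ hb3a3 s3
  have e12 : (α₁ * β₁) * (α₂ * β₂) = -((α₁ * α₂) * (β₁ * β₂)) := swap4 _ _ _ _ hb1a2
  have e13 : (α₁ * β₁) * (α₃ * β₃) = -((α₁ * α₃) * (β₁ * β₃)) := swap4 _ _ _ _ hb1a3
  have e23 : (α₂ * β₂) * (α₃ * β₃) = -((α₂ * α₃) * (β₂ * β₃)) := swap4 _ _ _ _ hb2a3
  have e21 : (α₂ * β₂) * (α₁ * β₁) = -((α₁ * α₂) * (β₁ * β₂)) := by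
    rw [swap4 _ _ _ _ hb2a1, hα21, hβ21]; noncomm_ring
  have e31 : (α₃ * β₃) * (α₁ * β₁) = -((α₁ * α₃) * (β₁ * β₃)) := by
    rw [swap4 _ _ _ _ hb3a1, hα31, hβ31]; noncomm_ring
  have e32 : (α₃ * β₃) * (α₂ * β₂) = -((α₂ * α₃) * (β₂ * β₃)) := by
    rw [swap4 _ _ _ _ hb3a2, hα32, hβ32]; noncomm_ring
  have h3 : Real.sqrt 3 * Real.sqrt 3 = 3 := Real.mul_self_sqrt (by norm_num)
  constructor
  · simp only [map_smul, map_add]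
    rw [dF1, dF2, dF3]
    module
  · simp only [map_smul, map_add, map_sub]
    rw [d123a, d123b, dT1, dT2, dT3, dT4, dT5, dT6]
    have hexp : (α₁ * β₁ + α₂ * β₂ + α₃ * β₃) * (α₁ * β₁ + α₂ * β₂ + α₃ * β₃)
        = (α₁ * β₁) * (α₁ * β₁) + (α₁ * β₁) * (α₂ * β₂) + (α₁ * β₁) * (α₃ * β₃)
          + (α₂ * β₂) * (α₁ * β₁) + (α₂ * β₂) * (α₂ * β₂) + (α₂ * β₂) * (α₃ * β₃)
          + (α₃ * β₃) * (α₁ * β₁) + (α₃ * β₃) * (α₂ * β₂) + (α₃ * β₃) * (α₃ * β₃) := by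
      noncomm_ring
    rw [smul_mul_smul_comm, hexp, e11, e22, e33, e12, e13, e23, e21, e31, e32]
    match_scalars <;> nlinarith [h3]
end

section
/- On the 5-dimensional Lie algebra su(2) ⊕ ℝ² with Chevalley-Eilenberg differentials de¹ = 0, de² = -3e³∧e⁵, de³ = 3e²∧e⁵, de⁴ = 0, de⁵ = -4e²∧e³ (the μ = 0 case), the family η(t) = η, ω₁(t) = ω₁ - t dη, ω₂(t) = cosh(3t) ω₂, ω₃(t) = -sinh(3t) ω₁ + ω₃ (where η = e⁵, ω₁ = e¹² + e³⁴, ω₂ = e¹³ + e⁴², ω₃ = e¹⁴ + e²³) solves the Conti-Salamon hypo evolution equations ∂ₜω₁ = -dη, ∂ₜ(η∧ω₃) = dω₂, ∂ₜ(η∧ω₂) = -dω₃; however, for t ≠ 0 it fails the SU(2)-compatibility, since ω₂(t)∧ω₂(t) = 2cosh²(3t) e¹²³⁴ while ω₁(t)∧ω₁(t) = 2e¹²³⁴. -/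
private lemma aux_self_eq_neg {A : Type*} [AddCommGroup A] [Module ℝ A] {a : A}
    (h : a = -a) : a = 0 := by
  have h2 : (2:ℝ) • a = 0 := by
    rw [two_smul]; nth_rewrite 2 [h]; exact add_neg_cancel a
  calc a = ((2:ℝ)⁻¹ * 2) • a := by norm_num
    _ = (2:ℝ)⁻¹ • ((2:ℝ) • a) := mul_smul _ _ _
    _ = 0 := by rw [h2, smul_zero]

private lemma aux_smul_cancel {A : Type*} [AddCommGroup A] [Module ℝ A] {a b : ℝ} {v : A}
    (h : a • v = b • v) (hab : a ≠ b) : v = 0 := by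
  have h0 : (a - b) • v = 0 := by rw [sub_smul, h, sub_self]
  have h1 : ((a - b)⁻¹ * (a - b)) • v = 0 := by rw [mul_smul, h0, smul_zero]
  rwa [inv_mul_cancel₀ (sub_ne_zero.mpr hab), one_smul] at h1

/-- On the Lie algebra `su(2) ⊕ ℝ²` with Chevalley-Eilenberg differentials
`de¹ = 0`, `de² = -3e³⁵`, `de³ = 3e²⁵`, `de⁴ = 0`, `de⁵ = -4e²³` (the `μ = 0` case), the family
`η(t) = η`, `ω₁(t) = ω₁ - t dη`, `ω₂(t) = cosh(3t) ω₂`, `ω₃(t) = -sinh(3t) ω₁ + ω₃`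
(with `η = e⁵`, `ω₁ = e¹² + e³⁴`, `ω₂ = e¹³ + e⁴²`, `ω₃ = e¹⁴ + e²³`) solves the
Conti-Salamon hypo evolution equations `∂ₜω₁ = -dη`, `∂ₜ(η∧ω₃) = dω₂`, `∂ₜ(η∧ω₂) = -dω₃`;
however, for `t ≠ 0` it fails the SU(2)-compatibility, since
`ω₂(t)∧ω₂(t) = 2cosh²(3t) e¹²³⁴` while `ω₁(t)∧ω₁(t) = 2 e¹²³⁴`. -/
theorem hypo_evolution_solution_not_SU2 {A : Type*} [NormedRing A] [NormedAlgebra ℝ A]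
    (d : A →ₗ[ℝ] A) (e₁ e₂ e₃ e₄ e₅ : A)
    -- the 1-forms anticommute
    (hanti : ∀ x ∈ ({e₁, e₂, e₃, e₄, e₅} : Set A), ∀ y ∈ ({e₁, e₂, e₃, e₄, e₅} : Set A),
      x * y = -(y * x))
    -- antiderivation property on products of 1-forms and of a 1-form with a 2-form
    (hL2 : ∀ x ∈ ({e₁, e₂, e₃, e₄, e₅} : Set A), ∀ y ∈ ({e₁, e₂, e₃, e₄, e₅} : Set A),
      d (x * y) = d x * y - x * d y)
    (hL12 : ∀ x ∈ ({e₁, e₂, e₃, e₄, e₅} : Set A), ∀ y ∈ ({e₁, e₂, e₃, e₄, e₅} : Set A),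
      ∀ z ∈ ({e₁, e₂, e₃, e₄, e₅} : Set A),
      d (x * (y * z)) = d x * (y * z) - x * d (y * z))
    -- the basis 4-form is nonzero
    (hne : e₁ * e₂ * e₃ * e₄ ≠ 0)
    -- structure equations (μ = 0)
    (h1 : d e₁ = 0)
    (h2 : d e₂ = (-3 : ℝ) • (e₃ * e₅))
    (h3 : d e₃ = (3 : ℝ) • (e₂ * e₅))
    (h4 : d e₄ = 0)
    (h5 : d e₅ = (-4 : ℝ) • (e₂ * e₃)) :
    -- ∂ₜω₁(t) = -dη
    (∀ t : ℝ, deriv (fun s : ℝ => (e₁ * e₂ + e₃ * e₄) - s • d e₅) t = -d e₅) ∧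
    -- ∂ₜ(η∧ω₃(t)) = dω₂(t)
    (∀ t : ℝ, deriv (fun s : ℝ =>
          e₅ * (-(Real.sinh (3 * s)) • (e₁ * e₂ + e₃ * e₄) + (e₁ * e₄ + e₂ * e₃))) t
        = d (Real.cosh (3 * t) • (e₁ * e₃ + e₄ * e₂))) ∧
    -- ∂ₜ(η∧ω₂(t)) = -dω₃(t)
    (∀ t : ℝ, deriv (fun s : ℝ => e₅ * (Real.cosh (3 * s) • (e₁ * e₃ + e₄ * e₂))) t
        = -d (-(Real.sinh (3 * t)) • (e₁ * e₂ + e₃ * e₄) + (e₁ * e₄ + e₂ * e₃))) ∧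
    -- the wedge squares
    (∀ t : ℝ,
      (Real.cosh (3 * t) • (e₁ * e₃ + e₄ * e₂)) * (Real.cosh (3 * t) • (e₁ * e₃ + e₄ * e₂))
        = (2 * Real.cosh (3 * t) ^ 2) • (e₁ * e₂ * e₃ * e₄) ∧
      ((e₁ * e₂ + e₃ * e₄) - t • d e₅) * ((e₁ * e₂ + e₃ * e₄) - t • d e₅)
        = (2 : ℝ) • (e₁ * e₂ * e₃ * e₄)) ∧
    -- failure of the SU(2)-compatibility for t ≠ 0
    (∀ t : ℝ, t ≠ 0 →
      (Real.cosh (3 * t) • (e₁ * e₃ + e₄ * e₂)) * (Real.cosh (3 * t) • (e₁ * e₃ + e₄ * e₂))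
        ≠ ((e₁ * e₂ + e₃ * e₄) - t • d e₅) * ((e₁ * e₂ + e₃ * e₄) - t • d e₅)) := by
  have m1 : e₁ ∈ ({e₁, e₂, e₃, e₄, e₅} : Set A) := by simp
  have m2 : e₂ ∈ ({e₁, e₂, e₃, e₄, e₅} : Set A) := by simp
  have m3 : e₃ ∈ ({e₁, e₂, e₃, e₄, e₅} : Set A) := by simp
  have m4 : e₄ ∈ ({e₁, e₂, e₃, e₄, e₅} : Set A) := by simp
  have m5 : e₅ ∈ ({e₁, e₂, e₃, e₄, e₅} : Set A) := by simp
  have key : ∀ x ∈ ({e₁, e₂, e₃, e₄, e₅} : Set A), ∀ y ∈ ({e₁, e₂, e₃, e₄, e₅} : Set A),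
      ∀ z : A, x * (y * z) = -(y * (x * z)) := by
    intro x hx y hy z
    rw [← mul_assoc, hanti x hx y hy, neg_mul, mul_assoc]
  -- binary swaps (oriented towards sorted order)
  have w21 : e₂ * e₁ = -(e₁ * e₂) := hanti e₂ m2 e₁ m1
  have w31 : e₃ * e₁ = -(e₁ * e₃) := hanti e₃ m3 e₁ m1
  have w32 : e₃ * e₂ = -(e₂ * e₃) := hanti e₃ m3 e₂ m2
  have w41 : e₄ * e₁ = -(e₁ * e₄) := hanti e₄ m4 e₁ m1
  have w42 : e₄ * e₂ = -(e₂ * e₄) := hanti e₄ m4 e₂ m2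
  have w43 : e₄ * e₃ = -(e₃ * e₄) := hanti e₄ m4 e₃ m3
  have w51 : e₅ * e₁ = -(e₁ * e₅) := hanti e₅ m5 e₁ m1
  have w52 : e₅ * e₂ = -(e₂ * e₅) := hanti e₅ m5 e₂ m2
  have w53 : e₅ * e₃ = -(e₃ * e₅) := hanti e₅ m5 e₃ m3
  have w54 : e₅ * e₄ = -(e₄ * e₅) := hanti e₅ m5 e₄ m4
  have w21' : ∀ z, e₂ * (e₁ * z) = -(e₁ * (e₂ * z)) := key e₂ m2 e₁ m1
  have w31' : ∀ z, e₃ * (e₁ * z) = -(e₁ * (e₃ * z)) := key e₃ m3 e₁ m1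
  have w32' : ∀ z, e₃ * (e₂ * z) = -(e₂ * (e₃ * z)) := key e₃ m3 e₂ m2
  have w41' : ∀ z, e₄ * (e₁ * z) = -(e₁ * (e₄ * z)) := key e₄ m4 e₁ m1
  have w42' : ∀ z, e₄ * (e₂ * z) = -(e₂ * (e₄ * z)) := key e₄ m4 e₂ m2
  have w43' : ∀ z, e₄ * (e₃ * z) = -(e₃ * (e₄ * z)) := key e₄ m4 e₃ m3
  have w51' : ∀ z, e₅ * (e₁ * z) = -(e₁ * (e₅ * z)) := key e₅ m5 e₁ m1
  have w52' : ∀ z, e₅ * (e₂ * z) = -(e₂ * (e₅ * z)) := key e₅ m5 e₂ m2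
  have w53' : ∀ z, e₅ * (e₃ * z) = -(e₃ * (e₅ * z)) := key e₅ m5 e₃ m3
  have w54' : ∀ z, e₅ * (e₄ * z) = -(e₄ * (e₅ * z)) := key e₅ m5 e₄ m4
  -- squares vanish
  have q1 : e₁ * e₁ = 0 := aux_self_eq_neg (hanti e₁ m1 e₁ m1)
  have q2 : e₂ * e₂ = 0 := aux_self_eq_neg (hanti e₂ m2 e₂ m2)
  have q3 : e₃ * e₃ = 0 := aux_self_eq_neg (hanti e₃ m3 e₃ m3)
  have q4 : e₄ * e₄ = 0 := aux_self_eq_neg (hanti e₄ m4 e₄ m4)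
  have q5 : e₅ * e₅ = 0 := aux_self_eq_neg (hanti e₅ m5 e₅ m5)
  have q1' : ∀ z, e₁ * (e₁ * z) = 0 := fun z => by rw [← mul_assoc, q1, zero_mul]
  have q2' : ∀ z, e₂ * (e₂ * z) = 0 := fun z => by rw [← mul_assoc, q2, zero_mul]
  have q3' : ∀ z, e₃ * (e₃ * z) = 0 := fun z => by rw [← mul_assoc, q3, zero_mul]
  have q4' : ∀ z, e₄ * (e₄ * z) = 0 := fun z => by rw [← mul_assoc, q4, zero_mul]
  have q5' : ∀ z, e₅ * (e₅ * z) = 0 := fun z => by rw [← mul_assoc, q5, zero_mul]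
  -- differentials of the basic 2-forms
  have hd12 : d (e₁ * e₂) = (3:ℝ) • (e₁ * (e₃ * e₅)) := by
    rw [hL2 e₁ m1 e₂ m2, h1, h2]
    simp only [zero_mul, zero_sub, mul_smul_comm, neg_smul, mul_neg, neg_neg, mul_assoc]
    try module
  have hd34 : d (e₃ * e₄) = (-3:ℝ) • (e₂ * (e₄ * e₅)) := by
    rw [hL2 e₃ m3 e₄ m4, h3, h4]
    simp only [mul_zero, sub_zero, smul_mul_assoc, mul_assoc, w54', w54, mul_neg, neg_neg,
      smul_neg, neg_smul]
  have hd13 : d (e₁ * e₃) = (-3:ℝ) • (e₁ * (e₂ * e₅)) := by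
    rw [hL2 e₁ m1 e₃ m3, h1, h3]
    simp only [zero_mul, zero_sub, mul_smul_comm, neg_smul, mul_neg, neg_neg, mul_assoc]
    try module
  have hd42 : d (e₄ * e₂) = (-3:ℝ) • (e₃ * (e₄ * e₅)) := by
    rw [hL2 e₄ m4 e₂ m2, h4, h2]
    simp only [zero_mul, zero_sub, mul_smul_comm, neg_smul, neg_neg, mul_assoc,
      w43', w43, mul_neg, smul_neg]
  have hd14 : d (e₁ * e₄) = 0 := by
    rw [hL2 e₁ m1 e₄ m4, h1, h4]
    simp only [zero_mul, mul_zero, sub_zero, zero_sub, neg_zero]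
  have hd23 : d (e₂ * e₃) = 0 := by
    rw [hL2 e₂ m2 e₃ m3, h2, h3]
    simp only [smul_mul_assoc, mul_smul_comm, mul_assoc, w53', w53, mul_neg, neg_neg,
      q3', q2', smul_zero, neg_zero, sub_zero, smul_neg, zero_sub, sub_self]
  refine ⟨?_, ?_, ?_, ?_, ?_⟩
  · -- ∂ₜω₁(t) = -dη
    intro t
    have hid : HasDerivAt (fun s : ℝ => s • d e₅) ((1:ℝ) • d e₅) t :=
      (hasDerivAt_id t).smul_const _
    have hh : HasDerivAt (fun s : ℝ => (e₁ * e₂ + e₃ * e₄) - s • d e₅)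
        (-((1:ℝ) • d e₅)) t := hid.const_sub _
    rw [hh.deriv, one_smul]
  · -- ∂ₜ(η∧ω₃(t)) = dω₂(t)
    intro t
    have hfun : (fun s : ℝ =>
        e₅ * (-(Real.sinh (3 * s)) • (e₁ * e₂ + e₃ * e₄) + (e₁ * e₄ + e₂ * e₃)))
        = fun s : ℝ => (-(Real.sinh (3 * s))) • (e₅ * (e₁ * e₂ + e₃ * e₄))
            + e₅ * (e₁ * e₄ + e₂ * e₃) := by
      funext s; rw [mul_add, mul_smul_comm]
    rw [hfun]
    have h3s : HasDerivAt (fun s : ℝ => 3 * s) 3 t := by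
      simpa using (hasDerivAt_id t).const_mul (3:ℝ)
    have hD : HasDerivAt (fun s : ℝ => (-(Real.sinh (3 * s))) • (e₅ * (e₁ * e₂ + e₃ * e₄))
        + e₅ * (e₁ * e₄ + e₂ * e₃))
        ((-(Real.cosh (3 * t) * 3)) • (e₅ * (e₁ * e₂ + e₃ * e₄))) t :=
      ((h3s.sinh.neg).smul_const _).add_const _
    rw [hD.deriv, map_smul, map_add, hd13, hd42]
    simp only [mul_add, smul_add, mul_assoc, w51', w51, w52', w52, w53', w53, w54', w54,
      mul_neg, neg_neg, neg_smul, smul_neg, smul_smul]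
    try module
  · -- ∂ₜ(η∧ω₂(t)) = -dω₃(t)
    intro t
    have hfun : (fun s : ℝ => e₅ * (Real.cosh (3 * s) • (e₁ * e₃ + e₄ * e₂)))
        = fun s : ℝ => Real.cosh (3 * s) • (e₅ * (e₁ * e₃ + e₄ * e₂)) := by
      funext s; rw [mul_smul_comm]
    rw [hfun]
    have h3s : HasDerivAt (fun s : ℝ => 3 * s) 3 t := by
      simpa using (hasDerivAt_id t).const_mul (3:ℝ)
    have hD : HasDerivAt (fun s : ℝ => Real.cosh (3 * s) • (e₅ * (e₁ * e₃ + e₄ * e₂)))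
        ((Real.sinh (3 * t) * 3) • (e₅ * (e₁ * e₃ + e₄ * e₂))) t :=
      h3s.cosh.smul_const _
    rw [hD.deriv, map_add, map_smul, map_add, map_add, hd12, hd34, hd14, hd23]
    simp only [mul_add, smul_add, mul_assoc, w51', w51, w52', w52, w53', w53, w54', w54,
      w42', w42, mul_neg, neg_neg, neg_smul, smul_neg, smul_smul, add_zero, smul_zero]
    try module
  · -- the wedge squares
    intro t
    constructor
    · simp only [smul_mul_assoc, mul_smul_comm, smul_smul, mul_add, add_mul, mul_assoc,
        w21, w21', w31, w31', w32, w32', w41, w41', w42, w42', w43, w43',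
        q1, q1', q2, q2', q3, q3', q4, q4', mul_neg, neg_mul, neg_neg,
        mul_zero, zero_mul, add_zero, zero_add, smul_add, smul_neg, neg_zero]
      try module
    · rw [h5]
      simp only [smul_mul_assoc, mul_smul_comm, smul_smul, mul_add, add_mul, mul_sub,
        sub_mul, mul_assoc, w21, w21', w31, w31', w32, w32', w41, w41', w42, w42', w43, w43',
        q1, q1', q2, q2', q3, q3', q4, q4', mul_neg, neg_mul, neg_neg,
        mul_zero, zero_mul, add_zero, zero_add, smul_add, smul_neg, neg_zero, smul_zero,
        sub_zero, zero_sub]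
      try module
  · -- failure of SU(2)-compatibility
    intro t ht h
    have W2 : (Real.cosh (3 * t) • (e₁ * e₃ + e₄ * e₂)) *
        (Real.cosh (3 * t) • (e₁ * e₃ + e₄ * e₂))
        = (2 * Real.cosh (3 * t) ^ 2) • (e₁ * e₂ * e₃ * e₄) := by
      simp only [smul_mul_assoc, mul_smul_comm, smul_smul, mul_add, add_mul, mul_assoc,
        w21, w21', w31, w31', w32, w32', w41, w41', w42, w42', w43, w43',
        q1, q1', q2, q2', q3, q3', q4, q4', mul_neg, neg_mul, neg_neg,
        mul_zero, zero_mul, add_zero, zero_add, smul_add, smul_neg, neg_zero]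
      try module
    have W1 : ((e₁ * e₂ + e₃ * e₄) - t • d e₅) * ((e₁ * e₂ + e₃ * e₄) - t • d e₅)
        = (2 : ℝ) • (e₁ * e₂ * e₃ * e₄) := by
      rw [h5]
      simp only [smul_mul_assoc, mul_smul_comm, smul_smul, mul_add, add_mul, mul_sub,
        sub_mul, mul_assoc, w21, w21', w31, w31', w32, w32', w41, w41', w42, w42', w43, w43',
        q1, q1', q2, q2', q3, q3', q4, q4', mul_neg, neg_mul, neg_neg,
        mul_zero, zero_mul, add_zero, zero_add, smul_add, smul_neg, neg_zero, smul_zero,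
        sub_zero, zero_sub]
      try module
    rw [W2, W1] at h
    have hcosh : 1 < Real.cosh (3 * t) :=
      Real.one_lt_cosh.mpr (mul_ne_zero three_ne_zero ht)
    have hab : 2 * Real.cosh (3 * t) ^ 2 ≠ 2 := by nlinarith
    exact hne (aux_smul_cancel h hab)
end

section
/- On the Lie algebra su(2) ⊕ ℝ² as above (de¹ = de⁴ = 0, de² = -3e³⁵, de³ = 3e²⁵, de⁵ = -4e²³), the family η(t) = e⁵, ω₂(t) = cos(√3 t)(e¹³ + e⁴²), ω₁(t) = cos(√3 t)(e¹² + e³⁴) - (√3/2)sin(2√3 t)e¹⁴ + (1/(2√3))sin(2√3 t)e²³, ω₃(t) = (1/√3)sin(√3 t)(e¹² + e³⁴) + cos(2√3 t)e¹⁴ + (4/3 - (1/3)cos(2√3 t))e²³ solves the nearly hypo evolution equations ∂ₜω₁ = -dη - 3ω₃, ∂ₜ(η∧ω₃) = dω₂ + 4η∧ω₁, ∂ₜ(η∧ω₂) = -dω₃. -/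
/-!
The structure equations and the antiderivation rule give
`d(e¹² + e³⁴) = 3 e⁵ ∧ (e¹³ + e⁴²)`, `d(e¹³ + e⁴²) = -3 e⁵ ∧ (e¹² + e³⁴)` and `de¹⁴ = de²³ = 0`
(the last because `e²` and `e³` square to zero). Hence both sides of each evolution equation
are combinations of `e¹² + e³⁴, e¹³ + e⁴², e¹⁴, e²³` (times `e⁵` for the last two equations),
and comparing coefficients leaves trigonometric identities in `√3 t` and `2√3 t`.
-/

open Real

theorem eq_zero_of_eq_neg {M : Type*} [AddCommGroup M] [Module ℝ M] {v : M} (h : v = -v) :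
    v = 0 := by
  simpa [eq_neg_iff_add_eq_zero, ← two_smul ℝ] using h

theorem mul_mul_eq_mul_mul_of_anticomm {A : Type*} [Ring A] {x y z : A}
    (hxz : x * z = -(z * x)) (hyz : y * z = -(z * y)) : x * (y * z) = z * (x * y) := by
  rw [hyz, mul_neg, ← mul_assoc, hxz, neg_mul, neg_neg, mul_assoc]

structure IsSU2R2Coframe {A : Type*} [Ring A] [Algebra ℝ A] (d : A →ₗ[ℝ] A)
    (e₁ e₂ e₃ e₄ e₅ : A) : Prop where
  anticomm : ∀ x ∈ ({e₁, e₂, e₃, e₄, e₅} : Set A), ∀ y ∈ ({e₁, e₂, e₃, e₄, e₅} : Set A),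
    x * y = -(y * x)
  d_mul : ∀ x ∈ ({e₁, e₂, e₃, e₄, e₅} : Set A), ∀ y ∈ ({e₁, e₂, e₃, e₄, e₅} : Set A),
    d (x * y) = d x * y - x * d y
  d_e₁ : d e₁ = 0
  d_e₂ : d e₂ = (-3 : ℝ) • (e₃ * e₅)
  d_e₃ : d e₃ = (3 : ℝ) • (e₂ * e₅)
  d_e₄ : d e₄ = 0
  d_e₅ : d e₅ = (-4 : ℝ) • (e₂ * e₃)

namespace IsSU2R2Coframe

section Algebraic

variable {A : Type*} [Ring A] [Algebra ℝ A] {d : A →ₗ[ℝ] A} {e₁ e₂ e₃ e₄ e₅ : A}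

theorem d_e₁₂_add_e₃₄ (h : IsSU2R2Coframe d e₁ e₂ e₃ e₄ e₅) :
    d (e₁ * e₂ + e₃ * e₄) = (3 : ℝ) • (e₅ * (e₁ * e₃ + e₄ * e₂)) := by
  have h₁₃₅ : e₁ * (e₃ * e₅) = e₅ * (e₁ * e₃) :=
    mul_mul_eq_mul_mul_of_anticomm (h.anticomm e₁ (by simp) e₅ (by simp))
      (h.anticomm e₃ (by simp) e₅ (by simp))
  have h₂₅₄ : e₂ * e₅ * e₄ = e₅ * (e₄ * e₂) := by
    rw [mul_assoc, mul_mul_eq_mul_mul_of_anticomm (h.anticomm e₂ (by simp) e₄ (by simp))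
      (h.anticomm e₅ (by simp) e₄ (by simp)), mul_mul_eq_mul_mul_of_anticomm
      (h.anticomm e₄ (by simp) e₅ (by simp)) (h.anticomm e₂ (by simp) e₅ (by simp))]
  rw [map_add, h.d_mul e₁ (by simp) e₂ (by simp), h.d_mul e₃ (by simp) e₄ (by simp), h.d_e₁,
    h.d_e₂, h.d_e₃, h.d_e₄, mul_smul_comm, smul_mul_assoc, h₁₃₅, h₂₅₄, mul_add, zero_mul,
    mul_zero]
  module

theorem d_e₁₃_add_e₄₂ (h : IsSU2R2Coframe d e₁ e₂ e₃ e₄ e₅) :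
    d (e₁ * e₃ + e₄ * e₂) = (-3 : ℝ) • (e₅ * (e₁ * e₂ + e₃ * e₄)) := by
  have h₁₂₅ : e₁ * (e₂ * e₅) = e₅ * (e₁ * e₂) :=
    mul_mul_eq_mul_mul_of_anticomm (h.anticomm e₁ (by simp) e₅ (by simp))
      (h.anticomm e₂ (by simp) e₅ (by simp))
  have h₄₃₅ : e₄ * (e₃ * e₅) = -(e₅ * (e₃ * e₄)) := by
    rw [mul_mul_eq_mul_mul_of_anticomm (h.anticomm e₄ (by simp) e₅ (by simp))
      (h.anticomm e₃ (by simp) e₅ (by simp)), h.anticomm e₄ (by simp) e₃ (by simp), mul_neg]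
  rw [map_add, h.d_mul e₁ (by simp) e₃ (by simp), h.d_mul e₄ (by simp) e₂ (by simp), h.d_e₁,
    h.d_e₂, h.d_e₃, h.d_e₄, mul_smul_comm, mul_smul_comm, h₁₂₅, h₄₃₅, mul_add, zero_mul, zero_mul]
  module

theorem d_e₁₄ (h : IsSU2R2Coframe d e₁ e₂ e₃ e₄ e₅) : d (e₁ * e₄) = 0 := by
  rw [h.d_mul e₁ (by simp) e₄ (by simp), h.d_e₁, h.d_e₄, zero_mul, mul_zero, sub_zero]

theorem d_e₂₃ (h : IsSU2R2Coframe d e₁ e₂ e₃ e₄ e₅) : d (e₂ * e₃) = 0 := by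
  have h₂₂ : e₂ * e₂ = 0 :=
    eq_zero_of_eq_neg (h.anticomm e₂ (by simp) e₂ (by simp))
  have h₃₃ : e₃ * e₃ = 0 :=
    eq_zero_of_eq_neg (h.anticomm e₃ (by simp) e₃ (by simp))
  have h₃₅₃ : e₃ * e₅ * e₃ = 0 := by
    rw [mul_assoc, h.anticomm e₅ (by simp) e₃ (by simp), mul_neg, ← mul_assoc, h₃₃, zero_mul,
      neg_zero]
  rw [h.d_mul e₂ (by simp) e₃ (by simp), h.d_e₂, h.d_e₃, smul_mul_assoc, h₃₅₃, mul_smul_comm,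
    ← mul_assoc, h₂₂, zero_mul, smul_zero, smul_zero, sub_zero]

end Algebraic

end IsSU2R2Coframe

section Family

variable {A : Type*} [NormedRing A] [NormedAlgebra ℝ A] (e₁ e₂ e₃ e₄ : A)

noncomputable def ω₁ (t : ℝ) : A :=
  cos (√3 * t) • (e₁ * e₂ + e₃ * e₄) - (√3 / 2 * sin (2 * √3 * t)) • (e₁ * e₄)
    + (1 / (2 * √3) * sin (2 * √3 * t)) • (e₂ * e₃)

noncomputable def ω₂ (t : ℝ) : A :=
  cos (√3 * t) • (e₁ * e₃ + e₄ * e₂)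

noncomputable def ω₃ (t : ℝ) : A :=
  (1 / √3 * sin (√3 * t)) • (e₁ * e₂ + e₃ * e₄) + cos (2 * √3 * t) • (e₁ * e₄)
    + (4 / 3 - 1 / 3 * cos (2 * √3 * t)) • (e₂ * e₃)

theorem hasDerivAt_ω₁ (t : ℝ) :
    HasDerivAt (ω₁ e₁ e₂ e₃ e₄)
      ((-(√3 * sin (√3 * t))) • (e₁ * e₂ + e₃ * e₄) - (3 * cos (2 * √3 * t)) • (e₁ * e₄)
        + cos (2 * √3 * t) • (e₂ * e₃)) t := by
  have hcos := (hasDerivAt_const_mul (x := t) √3).cos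
  have hsin := (hasDerivAt_const_mul (x := t) (2 * √3)).sin
  refine (((hcos.smul_const _).sub ((hsin.const_mul _).smul_const _)).add
    ((hsin.const_mul _).smul_const _)).congr_deriv ?_
  match_scalars <;> grind

theorem hasDerivAt_ω₂ (t : ℝ) :
    HasDerivAt (ω₂ e₁ e₂ e₃ e₄) ((-(√3 * sin (√3 * t))) • (e₁ * e₃ + e₄ * e₂)) t :=
  ((hasDerivAt_const_mul (x := t) √3).cos.smul_const _).congr_deriv (by rw [neg_mul, mul_comm])

theorem hasDerivAt_ω₃ (t : ℝ) :
    HasDerivAt (ω₃ e₁ e₂ e₃ e₄)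
      (cos (√3 * t) • (e₁ * e₂ + e₃ * e₄) - (2 * √3 * sin (2 * √3 * t)) • (e₁ * e₄)
        + (2 / √3 * sin (2 * √3 * t)) • (e₂ * e₃)) t := by
  have hsin := (hasDerivAt_const_mul (x := t) √3).sin
  have hcos := (hasDerivAt_const_mul (x := t) (2 * √3)).cos
  refine ((((hsin.const_mul _).smul_const _).add (hcos.smul_const _)).add
    (((hasDerivAt_const t _).sub (hcos.const_mul _)).smul_const _)).congr_deriv ?_
  match_scalars <;> grind

end Family

namespace IsSU2R2Coframe

variable {A : Type*} [NormedRing A] [NormedAlgebra ℝ A] {d : A →ₗ[ℝ] A} {e₁ e₂ e₃ e₄ e₅ : A}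

theorem deriv_ω₁ (h : IsSU2R2Coframe d e₁ e₂ e₃ e₄ e₅) (t : ℝ) :
    deriv (ω₁ e₁ e₂ e₃ e₄) t = -d e₅ - (3 : ℝ) • ω₃ e₁ e₂ e₃ e₄ t := by
  rw [(hasDerivAt_ω₁ e₁ e₂ e₃ e₄ t).deriv, h.d_e₅, ω₃]
  match_scalars <;> grind

theorem deriv_e₅_mul_ω₃ (h : IsSU2R2Coframe d e₁ e₂ e₃ e₄ e₅) (t : ℝ) :
    deriv (fun s => e₅ * ω₃ e₁ e₂ e₃ e₄ s) t
      = d (ω₂ e₁ e₂ e₃ e₄ t) + (4 : ℝ) • (e₅ * ω₁ e₁ e₂ e₃ e₄ t) := by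
  rw [((hasDerivAt_ω₃ e₁ e₂ e₃ e₄ t).const_mul e₅).deriv, ω₂, map_smul, h.d_e₁₃_add_e₄₂, ω₁]
  simp only [mul_add, mul_sub, mul_smul_comm]
  match_scalars <;> grind

theorem deriv_e₅_mul_ω₂ (h : IsSU2R2Coframe d e₁ e₂ e₃ e₄ e₅) (t : ℝ) :
    deriv (fun s => e₅ * ω₂ e₁ e₂ e₃ e₄ s) t = -d (ω₃ e₁ e₂ e₃ e₄ t) := by
  rw [((hasDerivAt_ω₂ e₁ e₂ e₃ e₄ t).const_mul e₅).deriv, ω₃, map_add, map_add, map_smul,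
    map_smul, map_smul, h.d_e₁₂_add_e₃₄, h.d_e₁₄, h.d_e₂₃]
  simp only [mul_add, mul_smul_comm]
  match_scalars <;> grind

end IsSU2R2Coframe

theorem nearlyHypo_evolution_solution_general {A : Type*} [NormedRing A] [NormedAlgebra ℝ A]
    (d : A →ₗ[ℝ] A) (e₁ e₂ e₃ e₄ e₅ : A)
    -- the 1-forms anticommute
    (hanti : ∀ x ∈ ({e₁, e₂, e₃, e₄, e₅} : Set A), ∀ y ∈ ({e₁, e₂, e₃, e₄, e₅} : Set A),
      x * y = -(y * x))
    -- antiderivation property on products of 1-forms and of a 1-form with a 2-form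
    (hL2 : ∀ x ∈ ({e₁, e₂, e₃, e₄, e₅} : Set A), ∀ y ∈ ({e₁, e₂, e₃, e₄, e₅} : Set A),
      d (x * y) = d x * y - x * d y)
    -- structure equations (μ = 0)
    (h1 : d e₁ = 0)
    (h2 : d e₂ = (-3 : ℝ) • (e₃ * e₅))
    (h3 : d e₃ = (3 : ℝ) • (e₂ * e₅))
    (h4 : d e₄ = 0)
    (h5 : d e₅ = (-4 : ℝ) • (e₂ * e₃)) :
    -- ∂ₜω₁(t) = -dη - 3ω₃(t)
    (∀ t : ℝ, deriv (fun s : ℝ =>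
          cos (Real.sqrt 3 * s) • (e₁ * e₂ + e₃ * e₄)
          - (Real.sqrt 3 / 2 * sin (2 * Real.sqrt 3 * s)) • (e₁ * e₄)
          + (1 / (2 * Real.sqrt 3) * sin (2 * Real.sqrt 3 * s)) • (e₂ * e₃)) t
        = -d e₅ - (3 : ℝ) •
            ((1 / Real.sqrt 3 * sin (Real.sqrt 3 * t)) • (e₁ * e₂ + e₃ * e₄)
              + cos (2 * Real.sqrt 3 * t) • (e₁ * e₄)
              + (4 / 3 - 1 / 3 * cos (2 * Real.sqrt 3 * t)) • (e₂ * e₃))) ∧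
    -- ∂ₜ(η∧ω₃(t)) = dω₂(t) + 4η∧ω₁(t)
    (∀ t : ℝ, deriv (fun s : ℝ =>
          e₅ * ((1 / Real.sqrt 3 * sin (Real.sqrt 3 * s)) • (e₁ * e₂ + e₃ * e₄)
            + cos (2 * Real.sqrt 3 * s) • (e₁ * e₄)
            + (4 / 3 - 1 / 3 * cos (2 * Real.sqrt 3 * s)) • (e₂ * e₃))) t
        = d (cos (Real.sqrt 3 * t) • (e₁ * e₃ + e₄ * e₂))
          + (4 : ℝ) • (e₅ *
              (cos (Real.sqrt 3 * t) • (e₁ * e₂ + e₃ * e₄)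
                - (Real.sqrt 3 / 2 * sin (2 * Real.sqrt 3 * t)) • (e₁ * e₄)
                + (1 / (2 * Real.sqrt 3) * sin (2 * Real.sqrt 3 * t)) • (e₂ * e₃)))) ∧
    -- ∂ₜ(η∧ω₂(t)) = -dω₃(t)
    (∀ t : ℝ, deriv (fun s : ℝ =>
          e₅ * (cos (Real.sqrt 3 * s) • (e₁ * e₃ + e₄ * e₂))) t
        = -d ((1 / Real.sqrt 3 * sin (Real.sqrt 3 * t)) • (e₁ * e₂ + e₃ * e₄)
            + cos (2 * Real.sqrt 3 * t) • (e₁ * e₄)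
            + (4 / 3 - 1 / 3 * cos (2 * Real.sqrt 3 * t)) • (e₂ * e₃))) := by
  have h : IsSU2R2Coframe d e₁ e₂ e₃ e₄ e₅ := ⟨hanti, hL2, h1, h2, h3, h4, h5⟩
  exact ⟨h.deriv_ω₁, h.deriv_e₅_mul_ω₃, h.deriv_e₅_mul_ω₂⟩

/-- On the Lie algebra `su(2) ⊕ ℝ²` (`de¹ = de⁴ = 0`, `de² = -3e³⁵`,
`de³ = 3e²⁵`, `de⁵ = -4e²³`), the family
`η(t) = e⁵`, `ω₂(t) = cos(√3 t)(e¹³ + e⁴²)`,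
`ω₁(t) = cos(√3 t)(e¹² + e³⁴) - (√3/2)sin(2√3 t)e¹⁴ + (1/(2√3))sin(2√3 t)e²³`,
`ω₃(t) = (1/√3)sin(√3 t)(e¹² + e³⁴) + cos(2√3 t)e¹⁴ + (4/3 - (1/3)cos(2√3 t))e²³`
solves the nearly hypo evolution equations `∂ₜω₁ = -dη - 3ω₃`, `∂ₜ(η∧ω₃) = dω₂ + 4η∧ω₁`,
`∂ₜ(η∧ω₂) = -dω₃`. -/
theorem nearlyHypo_evolution_solution {A : Type*} [NormedRing A] [NormedAlgebra ℝ A]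
    (d : A →ₗ[ℝ] A) (e₁ e₂ e₃ e₄ e₅ : A)
    -- the 1-forms anticommute
    (hanti : ∀ x ∈ ({e₁, e₂, e₃, e₄, e₅} : Set A), ∀ y ∈ ({e₁, e₂, e₃, e₄, e₅} : Set A),
      x * y = -(y * x))
    -- antiderivation property on products of 1-forms and of a 1-form with a 2-form
    (hL2 : ∀ x ∈ ({e₁, e₂, e₃, e₄, e₅} : Set A), ∀ y ∈ ({e₁, e₂, e₃, e₄, e₅} : Set A),
      d (x * y) = d x * y - x * d y)
    (hL12 : ∀ x ∈ ({e₁, e₂, e₃, e₄, e₅} : Set A), ∀ y ∈ ({e₁, e₂, e₃, e₄, e₅} : Set A),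
      ∀ z ∈ ({e₁, e₂, e₃, e₄, e₅} : Set A),
      d (x * (y * z)) = d x * (y * z) - x * d (y * z))
    -- structure equations (μ = 0)
    (h1 : d e₁ = 0)
    (h2 : d e₂ = (-3 : ℝ) • (e₃ * e₅))
    (h3 : d e₃ = (3 : ℝ) • (e₂ * e₅))
    (h4 : d e₄ = 0)
    (h5 : d e₅ = (-4 : ℝ) • (e₂ * e₃)) :
    -- ∂ₜω₁(t) = -dη - 3ω₃(t)
    (∀ t : ℝ, deriv (fun s : ℝ =>
          cos (Real.sqrt 3 * s) • (e₁ * e₂ + e₃ * e₄)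
          - (Real.sqrt 3 / 2 * sin (2 * Real.sqrt 3 * s)) • (e₁ * e₄)
          + (1 / (2 * Real.sqrt 3) * sin (2 * Real.sqrt 3 * s)) • (e₂ * e₃)) t
        = -d e₅ - (3 : ℝ) •
            ((1 / Real.sqrt 3 * sin (Real.sqrt 3 * t)) • (e₁ * e₂ + e₃ * e₄)
              + cos (2 * Real.sqrt 3 * t) • (e₁ * e₄)
              + (4 / 3 - 1 / 3 * cos (2 * Real.sqrt 3 * t)) • (e₂ * e₃))) ∧
    -- ∂ₜ(η∧ω₃(t)) = dω₂(t) + 4η∧ω₁(t)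
    (∀ t : ℝ, deriv (fun s : ℝ =>
          e₅ * ((1 / Real.sqrt 3 * sin (Real.sqrt 3 * s)) • (e₁ * e₂ + e₃ * e₄)
            + cos (2 * Real.sqrt 3 * s) • (e₁ * e₄)
            + (4 / 3 - 1 / 3 * cos (2 * Real.sqrt 3 * s)) • (e₂ * e₃))) t
        = d (cos (Real.sqrt 3 * t) • (e₁ * e₃ + e₄ * e₂))
          + (4 : ℝ) • (e₅ *
              (cos (Real.sqrt 3 * t) • (e₁ * e₂ + e₃ * e₄)
                - (Real.sqrt 3 / 2 * sin (2 * Real.sqrt 3 * t)) • (e₁ * e₄)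
                + (1 / (2 * Real.sqrt 3) * sin (2 * Real.sqrt 3 * t)) • (e₂ * e₃)))) ∧
    -- ∂ₜ(η∧ω₂(t)) = -dω₃(t)
    (∀ t : ℝ, deriv (fun s : ℝ =>
          e₅ * (cos (Real.sqrt 3 * s) • (e₁ * e₃ + e₄ * e₂))) t
        = -d ((1 / Real.sqrt 3 * sin (Real.sqrt 3 * t)) • (e₁ * e₂ + e₃ * e₄)
            + cos (2 * Real.sqrt 3 * t) • (e₁ * e₄)
            + (4 / 3 - 1 / 3 * cos (2 * Real.sqrt 3 * t)) • (e₂ * e₃))) :=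
  nearlyHypo_evolution_solution_general d e₁ e₂ e₃ e₄ e₅ hanti hL2 h1 h2 h3 h4 h5
end
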